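/- arXiv:2109.07772 — 11 statements merged into one kernel-verified Lean document; each statement's English description precedes it below -/
import Mathlib

section
/- Let f be a strongly hyperbolic function and b > 0. Then lim_{x→+∞} f'(x)/f'(x+b) = 1. -/
open Filter Set Real

/-- A strongly hyperbolic function `f : (0,∞) → (0,∞)`. -/
def StronglyHyperbolic (f : ℝ → ℝ) : Prop :=
  (∀ x ∈ Set.Ioi (0:ℝ), 0 < f x) ∧
  Filter.Tendsto f (nhdsWithin 0 (Set.Ioi 0)) Filter.atTop ∧
  Filter.Tendsto f Filter.atTop (nhds 0) ∧
  StrictConvexOn ℝ (Set.Ioi 0) f ∧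
  (∀ b : ℝ, Filter.Tendsto (fun x => f (x + b) / f x) Filter.atTop (nhds 1)) ∧
  (∀ x ∈ Set.Ioi (0:ℝ), DifferentiableAt ℝ f x) ∧
  StrictConvexOn ℝ (Set.Ioi 0) (fun x => Real.log |deriv f x|)

/-!
Write `q = |f'|` and `h(x) = log q(x) - log q(x + b)`. Since `f` is convex and decreases to `0`,
`f' < 0` is increasing, so `h ≥ 0`; convexity of `log q` makes `h` decreasing, so it suffices to
show `inf h = 0`. If `h ≥ ε > 0` everywhere, then `q` decays geometrically along `x + n b`, and
summing the tangent-line bounds `f(y) - f(y + b) ≤ b q(y)` gives `f(x) ≤ b q(x) / (1 - e^{-ε})`.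
On the other hand `f(x) - f(x + b) ≥ b q(x + b) ≥ e^{-h(1)} b q(x)` for `x ≥ 1`, so
`f(x + b) / f(x)` stays below a constant `< 1`, contradicting `f(x + b) / f(x) → 1`.
Finally `f'(x) / f'(x + b) = e^{h(x)} → 1`.
-/

open Topology

theorem ConvexOn.sub_comp_add_le_sub_comp_add {𝕜 : Type*} [Field 𝕜] [LinearOrder 𝕜]
    [IsStrictOrderedRing 𝕜] {s : Set 𝕜} {f : 𝕜 → 𝕜} (hf : ConvexOn 𝕜 s f) {x y b : 𝕜}
    (hx : x ∈ s) (hyb : y + b ∈ s) (hb : 0 ≤ b) (hxy : x ≤ y) :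
    f (x + b) - f x ≤ f (y + b) - f y := by
  rcases hb.eq_or_lt with rfl | hb
  · simp
  rcases hxy.eq_or_lt with rfl | hxy
  · rfl
  have hxb : x + b ∈ s := hf.1.ordConnected.out hx hyb ⟨by linarith, by linarith⟩
  have hy : y ∈ s := hf.1.ordConnected.out hx hyb ⟨hxy.le, by linarith⟩
  have h₁ := hf.secant_mono hx hxb hyb (by linarith) (by linarith) (by linarith)
  have h₂ := hf.secant_mono hyb hx hy (by linarith) (by linarith) hxy.le
  have : (f (x + b) - f x) / b ≤ (f (y + b) - f y) / b :=
    calc (f (x + b) - f x) / b = (f (x + b) - f x) / (x + b - x) := by ring_nf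
      _ ≤ (f (y + b) - f x) / (y + b - x) := h₁
      _ = (f x - f (y + b)) / (x - (y + b)) := by rw [← neg_div_neg_eq]; ring_nf
      _ ≤ (f y - f (y + b)) / (y - (y + b)) := h₂
      _ = (f (y + b) - f y) / b := by rw [← neg_div_neg_eq]; ring_nf
  exact (div_le_div_iff_of_pos_right hb).mp this

theorem ConvexOn.deriv_neg_of_tendsto_atTop {f : ℝ → ℝ} {a x c : ℝ}
    (hf : ConvexOn ℝ (Ioi a) f) (hx : a < x) (hd : DifferentiableAt ℝ f x)
    (hlim : Tendsto f atTop (𝓝 c)) (hc : c < f x) : deriv f x < 0 := by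
  obtain ⟨y, hfy, hxy⟩ :=
    ((hlim.eventually (eventually_lt_nhds hc)).and (eventually_gt_atTop x)).exists
  calc deriv f x ≤ slope f x y := hf.deriv_le_slope hx (hx.trans hxy) hxy hd
    _ < 0 := by
      rw [slope_def_field]
      exact div_neg_of_neg_of_pos (by linarith) (by linarith)

theorem le_div_one_sub_of_drop_le_geometric {f q : ℝ → ℝ} {x b r : ℝ} (hb : 0 < b)
    (hr₀ : 0 ≤ r) (hr₁ : r < 1) (hlim : Tendsto f atTop (𝓝 0))
    (hdrop : ∀ y ≥ x, |f y - f (y + b)| ≤ b * q y) (hq : ∀ y ≥ x, q (y + b) ≤ r * q y) :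
    f x ≤ b * q x / (1 - r) := by
  have hxn (n : ℕ) : x ≤ x + n * b := le_add_of_nonneg_right (by positivity)
  have hq_geom (n : ℕ) : q (x + n * b) ≤ r ^ n * q x := by
    simpa using le_geom (u := fun n : ℕ => q (x + n * b)) hr₀ n fun k _ => by
      simpa [add_mul, add_assoc] using hq _ (hxn k)
  have hdist (n : ℕ) : dist (f (x + n * b)) (f (x + (n + 1 : ℕ) * b)) ≤ b * q x * r ^ n := by
    calc dist (f (x + n * b)) (f (x + (n + 1 : ℕ) * b))
        = |f (x + n * b) - f (x + n * b + b)| := by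
          rw [Real.dist_eq]; push_cast; ring_nf
      _ ≤ b * q (x + n * b) := hdrop _ (hxn n)
      _ ≤ b * (r ^ n * q x) := by gcongr; exact hq_geom n
      _ = b * q x * r ^ n := by ring
  have hseq : Tendsto (fun n : ℕ => f (x + n * b)) atTop (𝓝 0) :=
    hlim.comp (tendsto_atTop_add_const_left _ _
      (tendsto_natCast_atTop_atTop.atTop_mul_const hb))
  have := dist_le_of_le_geometric_of_tendsto₀ r (b * q x) hr₁ hdist hseq
  simp only [Nat.cast_zero, zero_mul, add_zero, Real.dist_0_eq_abs] at this
  exact (le_abs_self _).trans this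

theorem AntitoneOn.tendsto_atTop_zero {h : ℝ → ℝ} {a : ℝ} (hh : AntitoneOn h (Ioi a))
    (hnonneg : ∀ x > a, 0 ≤ h x) (hsmall : ∀ ε > 0, ∃ x > a, h x < ε) :
    Tendsto h atTop (𝓝 0) := by
  refine tendsto_order.2 ⟨fun c hc => ?_, fun ε hε => ?_⟩
  · filter_upwards [eventually_gt_atTop a] with x hx using hc.trans_le (hnonneg x hx)
  · obtain ⟨x, hx, hhx⟩ := hsmall ε hε
    filter_upwards [eventually_ge_atTop x] with y hy
    exact (hh hx (hx.trans_le hy) hy).trans_lt hhx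

noncomputable def logAbsDerivGap (f : ℝ → ℝ) (b x : ℝ) : ℝ :=
  log |deriv f x| - log |deriv f (x + b)|

namespace StronglyHyperbolic

variable {f : ℝ → ℝ}

theorem convexOn (hf : StronglyHyperbolic f) : ConvexOn ℝ (Ioi 0) f :=
  hf.2.2.2.1.convexOn

theorem differentiableAt (hf : StronglyHyperbolic f) {x : ℝ} (hx : 0 < x) :
    DifferentiableAt ℝ f x :=
  hf.2.2.2.2.2.1 x hx

theorem convexOn_log_abs_deriv (hf : StronglyHyperbolic f) :
    ConvexOn ℝ (Ioi 0) (fun x => log |deriv f x|) :=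
  hf.2.2.2.2.2.2.convexOn

theorem deriv_neg (hf : StronglyHyperbolic f) {x : ℝ} (hx : 0 < x) : deriv f x < 0 := by
  obtain ⟨hpos, -, hlim, hconv, -, hdiff, -⟩ := hf
  exact hconv.convexOn.deriv_neg_of_tendsto_atTop hx (hdiff x hx) hlim (hpos x hx)

theorem abs_deriv_pos (hf : StronglyHyperbolic f) {x : ℝ} (hx : 0 < x) : 0 < |deriv f x| :=
  abs_pos.2 (hf.deriv_neg hx).ne

theorem antitoneOn_abs_deriv (hf : StronglyHyperbolic f) :
    AntitoneOn (fun x => |deriv f x|) (Ioi 0) := by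
  intro x hx y hy hxy
  simp only [abs_of_neg (hf.deriv_neg hx), abs_of_neg (hf.deriv_neg hy), neg_le_neg_iff]
  exact hf.convexOn.monotoneOn_deriv (fun _ => hf.differentiableAt) hx hy hxy

theorem mul_abs_deriv_add_le_sub (hf : StronglyHyperbolic f) {x b : ℝ} (hx : 0 < x) (hb : 0 < b) :
    b * |deriv f (x + b)| ≤ f x - f (x + b) := by
  have hxb : x < x + b := lt_add_of_pos_right x hb
  have := hf.convexOn.slope_le_deriv hx (hx.trans hxb) hxb (hf.differentiableAt (hx.trans hxb))
  rw [slope_def_field, add_sub_cancel_left, div_le_iff₀ hb] at this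
  rw [abs_of_neg (hf.deriv_neg (hx.trans hxb))]
  linarith

theorem sub_le_mul_abs_deriv (hf : StronglyHyperbolic f) {x b : ℝ} (hx : 0 < x) (hb : 0 < b) :
    f x - f (x + b) ≤ b * |deriv f x| := by
  have hxb : x < x + b := lt_add_of_pos_right x hb
  have := hf.convexOn.deriv_le_slope hx (hx.trans hxb) hxb (hf.differentiableAt hx)
  rw [slope_def_field, add_sub_cancel_left, le_div_iff₀ hb] at this
  rw [abs_of_neg (hf.deriv_neg hx)]
  linarith

theorem logAbsDerivGap_nonneg (hf : StronglyHyperbolic f) {x b : ℝ} (hx : 0 < x) (hb : 0 ≤ b) :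
    0 ≤ logAbsDerivGap f b x := by
  have hxb : 0 < x + b := by linarith
  refine sub_nonneg.2 (log_le_log (hf.abs_deriv_pos hxb) ?_)
  exact hf.antitoneOn_abs_deriv hx hxb (by linarith)

theorem antitoneOn_logAbsDerivGap (hf : StronglyHyperbolic f) {b : ℝ} (hb : 0 ≤ b) :
    AntitoneOn (logAbsDerivGap f b) (Ioi 0) := by
  intro x hx y hy hxy
  have := hf.convexOn_log_abs_deriv.sub_comp_add_le_sub_comp_add hx
    (show (0 : ℝ) < y + b by linarith [mem_Ioi.1 hy]) hb hxy
  simp only [logAbsDerivGap]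
  linarith

theorem abs_deriv_add_eq (hf : StronglyHyperbolic f) {x b : ℝ} (hx : 0 < x) (hb : 0 ≤ b) :
    |deriv f (x + b)| = exp (-logAbsDerivGap f b x) * |deriv f x| := by
  rw [logAbsDerivGap, neg_sub, exp_sub, exp_log (hf.abs_deriv_pos hx),
    exp_log (hf.abs_deriv_pos (by linarith)), div_mul_cancel₀ _ (hf.abs_deriv_pos hx).ne']

theorem exp_logAbsDerivGap (hf : StronglyHyperbolic f) {x b : ℝ} (hx : 0 < x) (hb : 0 ≤ b) :
    exp (logAbsDerivGap f b x) = deriv f x / deriv f (x + b) := by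
  rw [logAbsDerivGap, exp_sub, exp_log (hf.abs_deriv_pos hx),
    exp_log (hf.abs_deriv_pos (by linarith)), ← abs_div,
    abs_of_pos (div_pos_of_neg_of_neg (hf.deriv_neg hx) (hf.deriv_neg (by linarith)))]

theorem le_div_of_le_logAbsDerivGap (hf : StronglyHyperbolic f) {b ε x : ℝ} (hb : 0 < b)
    (hε : 0 < ε) (hx : 0 < x) (hgap : ∀ y ≥ x, ε ≤ logAbsDerivGap f b y) :
    f x ≤ b * |deriv f x| / (1 - exp (-ε)) := by
  refine le_div_one_sub_of_drop_le_geometric hb (exp_pos _).le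
    (exp_lt_one_iff.2 (neg_neg_of_pos hε)) hf.2.2.1 (q := fun y => |deriv f y|)
    (fun y hy => ?_) (fun y hy => ?_)
  · have hy0 : 0 < y := hx.trans_le hy
    rw [abs_of_nonneg ((mul_nonneg hb.le (abs_nonneg _)).trans
      (hf.mul_abs_deriv_add_le_sub hy0 hb))]
    exact hf.sub_le_mul_abs_deriv hy0 hb
  · rw [hf.abs_deriv_add_eq (hx.trans_le hy) hb.le]
    exact mul_le_mul_of_nonneg_right (exp_le_exp.2 (neg_le_neg (hgap y hy))) (abs_nonneg _)

theorem exists_logAbsDerivGap_lt (hf : StronglyHyperbolic f) {b ε : ℝ} (hb : 0 < b)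
    (hε : 0 < ε) : ∃ x > 0, logAbsDerivGap f b x < ε := by
  have ⟨hpos, _, _, _, hratio, _⟩ := hf
  by_contra! hgap
  set r := exp (-ε)
  have hr : r < 1 := exp_lt_one_iff.2 (neg_neg_of_pos hε)
  set δ := exp (-logAbsDerivGap f b 1) * (1 - r)
  have hδ : 0 < δ := mul_pos (exp_pos _) (sub_pos.2 hr)
  have hdrop (x : ℝ) (hx : 1 ≤ x) : δ * f x ≤ f x - f (x + b) := by
    have hx0 : 0 < x := one_pos.trans_le hx
    have hgrowth : exp (-logAbsDerivGap f b 1) * |deriv f x| ≤ |deriv f (x + b)| := by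
      rw [hf.abs_deriv_add_eq hx0 hb.le]
      gcongr
      exact hf.antitoneOn_logAbsDerivGap hb.le (mem_Ioi.2 one_pos) hx0 hx
    calc δ * f x ≤ exp (-logAbsDerivGap f b 1) * (1 - r) * (b * |deriv f x| / (1 - r)) := by
          gcongr
          exact hf.le_div_of_le_logAbsDerivGap hb hε hx0 fun y hy => hgap y (hx0.trans_le hy)
      _ = b * (exp (-logAbsDerivGap f b 1) * |deriv f x|) := by
          field_simp [(sub_pos.2 hr).ne']
      _ ≤ b * |deriv f (x + b)| := by gcongr
      _ ≤ f x - f (x + b) := hf.mul_abs_deriv_add_le_sub hx0 hb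
  obtain ⟨x, hlarge, hx⟩ := (((hratio b).eventually
    (eventually_gt_nhds (sub_lt_self 1 hδ))).and (eventually_ge_atTop 1)).exists
  rw [lt_div_iff₀ (hpos x (one_pos.trans_le hx))] at hlarge
  linarith [hdrop x hx]

theorem tendsto_logAbsDerivGap (hf : StronglyHyperbolic f) {b : ℝ} (hb : 0 < b) :
    Tendsto (logAbsDerivGap f b) atTop (𝓝 0) :=
  (hf.antitoneOn_logAbsDerivGap hb.le).tendsto_atTop_zero
    (fun _ hx => hf.logAbsDerivGap_nonneg hx hb.le)
    (fun _ hε => hf.exists_logAbsDerivGap_lt hb hε)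

end StronglyHyperbolic

theorem stmt1 (f : ℝ → ℝ) (hf : StronglyHyperbolic f) (b : ℝ) (hb : 0 < b) :
    Filter.Tendsto (fun x => deriv f x / deriv f (x + b)) Filter.atTop (nhds 1) := by
  have hexp := (continuous_exp.tendsto 0).comp (hf.tendsto_logAbsDerivGap hb)
  rw [Function.comp_def, exp_zero] at hexp
  refine hexp.congr' ?_
  filter_upwards [eventually_gt_atTop 0] with x hx using hf.exp_logAbsDerivGap hx hb.le
end

section
/- Let f be a strongly hyperbolic function. Then lim_{x→+∞} f'(x)/f(x) = 0. -/
open Filter Set Real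

theorem stmt2 (f : ℝ → ℝ) (hf : StronglyHyperbolic f) :
    Filter.Tendsto (fun x => deriv f x / f x) Filter.atTop (nhds 0) := by
  obtain ⟨hpos, -, -, hconv, htrans, hdiff, -⟩ := hf
  have hconv' : ConvexOn ℝ (Set.Ioi 0) f := hconv.convexOn
  have hhi : Filter.Tendsto (fun x => f (x + 1) / f x - 1) Filter.atTop (nhds 0) := by
    simpa using (htrans 1).sub_const 1
  have hlo : Filter.Tendsto (fun x => 1 - f (x + (-1)) / f x) Filter.atTop (nhds 0) := by
    have := ((htrans (-1)).sub_const 1).neg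
    simpa [neg_sub] using this
  refine tendsto_of_tendsto_of_tendsto_of_le_of_le' hlo hhi ?_ ?_
  · filter_upwards [eventually_gt_atTop (1:ℝ)] with x hx
    have hx0 : x ∈ Set.Ioi (0:ℝ) := by simp only [Set.mem_Ioi]; linarith
    have hx1 : x + (-1) ∈ Set.Ioi (0:ℝ) := by simp only [Set.mem_Ioi]; linarith
    have hfx : 0 < f x := hpos x hx0
    have h := hconv'.slope_le_deriv hx1 hx0 (by linarith) (hdiff x hx0)
    rw [slope_def_field] at h
    have h' : f x - f (x + (-1)) ≤ deriv f x := by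
      have hone : x - (x + (-1)) = 1 := by ring
      rw [hone, div_one] at h
      exact h
    calc 1 - f (x + (-1)) / f x = (f x - f (x + (-1))) / f x := by
          rw [sub_div, div_self hfx.ne']
      _ ≤ deriv f x / f x := by gcongr
  · filter_upwards [eventually_gt_atTop (0:ℝ)] with x hx
    have hx0 : x ∈ Set.Ioi (0:ℝ) := hx
    have hx1 : x + 1 ∈ Set.Ioi (0:ℝ) := by simp only [Set.mem_Ioi]; linarith
    have hfx : 0 < f x := hpos x hx0
    have h := hconv'.deriv_le_slope hx0 hx1 (by linarith) (hdiff x hx0)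
    rw [slope_def_field] at h
    have h' : deriv f x ≤ f (x + 1) - f x := by
      have hone : x + 1 - x = 1 := by ring
      rw [hone, div_one] at h
      exact h
    calc deriv f x / f x ≤ (f (x + 1) - f x) / f x := by gcongr
      _ = f (x + 1) / f x - 1 := by rw [sub_div, div_self hfx.ne']
end

section
/- Let f be a strongly hyperbolic function and s ≠ 0. Then lim_{x→+∞} (f(x+s) − f(x))/f'(x) = s. -/
open Filter Set Real

/-- Tangent line inequality for a convex differentiable function. -/
lemma SH.tangent {f : ℝ → ℝ} (hconv : StrictConvexOn ℝ (Set.Ioi 0) f)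
    (hdiff : ∀ x ∈ Set.Ioi (0:ℝ), DifferentiableAt ℝ f x)
    {x y : ℝ} (hx : 0 < x) (hy : 0 < y) :
    f x + deriv f x * (y - x) ≤ f y := by
  rcases lt_trichotomy x y with h | rfl | h
  · have h1 := hconv.convexOn.deriv_le_slope (Set.mem_Ioi.2 hx) (Set.mem_Ioi.2 hy) h
      (hdiff x (Set.mem_Ioi.2 hx))
    rw [slope_def_field] at h1
    have h2 : 0 < y - x := sub_pos.2 h
    rw [le_div_iff₀ h2] at h1
    linarith
  · simp
  · have h1 := hconv.convexOn.slope_le_deriv (Set.mem_Ioi.2 hy) (Set.mem_Ioi.2 hx) h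
      (hdiff x (Set.mem_Ioi.2 hx))
    rw [slope_def_field] at h1
    have h2 : 0 < x - y := sub_pos.2 h
    rw [div_le_iff₀ h2] at h1
    have h3 : deriv f x * (y - x) = -(deriv f x * (x - y)) := by ring
    linarith

/-- The derivative of a strongly hyperbolic function is negative. -/
lemma SH.deriv_neg {f : ℝ → ℝ} (hf : StronglyHyperbolic f) :
    ∀ x ∈ Set.Ioi (0:ℝ), deriv f x < 0 := by
  obtain ⟨hpos, -, hzero, hconv, -, hdiff, -⟩ := hf
  intro x hx
  by_contra hcon
  push_neg at hcon
  have hfx : 0 < f x := hpos x hx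
  have hev : ∀ᶠ y in atTop, f y < f x := hzero.eventually (eventually_lt_nhds hfx)
  obtain ⟨y, hy1, hy2⟩ := (hev.and (eventually_gt_atTop x)).exists
  have hx0 : (0:ℝ) < x := hx
  have htan := SH.tangent hconv hdiff hx0 (hx0.trans hy2)
  nlinarith [mul_nonneg hcon (sub_pos.2 hy2).le]

/-- Key lemma: the ratio `f'(x+t)/f'(x)` tends to `1`. -/
lemma SH.key {f : ℝ → ℝ} (hf : StronglyHyperbolic f) {t : ℝ} (ht : 0 < t) :
    Filter.Tendsto (fun x => deriv f (x + t) / deriv f x) Filter.atTop (nhds 1) := by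
  have hFneg := SH.deriv_neg hf
  obtain ⟨hpos, -, hzero, hconv, hratio, hdiff, hlog⟩ := hf
  set g : ℝ → ℝ := fun x => Real.log |deriv f x| with hgdef
  have hgconv : ConvexOn ℝ (Set.Ioi 0) g := hlog.convexOn
  have hFmono : MonotoneOn (deriv f) (Set.Ioi 0) := hconv.convexOn.monotoneOn_deriv hdiff
  have hgval : ∀ x ∈ Set.Ioi (0:ℝ), g x = Real.log (-deriv f x) := by
    intro x hx
    rw [hgdef]
    simp only
    rw [abs_of_neg (hFneg x hx)]
  set φ : ℝ → ℝ := fun x => g (x + t) - g x with hφdef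
  have hmem : ∀ x : ℝ, 0 < x → x ∈ Set.Ioi (0:ℝ) := fun x hx => hx
  have hmemt : ∀ x : ℝ, 0 < x → x + t ∈ Set.Ioi (0:ℝ) := fun x hx => by
    simp only [Set.mem_Ioi]; linarith
  -- monotonicity of φ
  have hmono : ∀ x y : ℝ, 0 < x → x ≤ y → φ x ≤ φ y := by
    intro x y hx hxy
    rcases eq_or_lt_of_le hxy with rfl | hlt
    · exact le_rfl
    have hy : 0 < y := hx.trans hlt
    have s1 := hgconv.secant_mono (hmem x hx) (hmemt x hx) (hmemt y hy)
      (by intro hc; nlinarith [ht] : x + t ≠ x) (by intro hc; nlinarith : y + t ≠ x)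
      (by linarith)
    have s2 := hgconv.secant_mono (hmemt y hy) (hmem x hx) (hmem y hy)
      (by intro hc; nlinarith : x ≠ y + t) (by intro hc; nlinarith [ht] : y ≠ y + t)
      hxy
    rw [show x + t - x = t by ring] at s1
    have e3 : (g x - g (y + t)) / (x - (y + t)) = (g (y + t) - g x) / (y + t - x) := by
      rw [show x - (y + t) = -(y + t - x) by ring, div_neg, ← neg_div, neg_sub]
    have e4 : (g y - g (y + t)) / (y - (y + t)) = (g (y + t) - g y) / t := by
      rw [show y - (y + t) = -t by ring, div_neg, ← neg_div, neg_sub]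
    rw [e3, e4] at s2
    have final : (g (x + t) - g x) / t ≤ (g (y + t) - g y) / t := s1.trans s2
    have := (div_le_div_iff_of_pos_right ht).1 final
    simpa [hφdef] using this
  -- φ ≤ 0
  have hle0 : ∀ x : ℝ, 0 < x → φ x ≤ 0 := by
    intro x hx
    have h1 := hFmono (hmem x hx) (hmemt x hx) (by linarith)
    have h2 := hFneg (x + t) (hmemt x hx)
    have h3 := hFneg x (hmem x hx)
    simp only [hφdef]
    rw [hgval _ (hmemt x hx), hgval _ (hmem x hx), sub_nonpos]
    exact (Real.log_le_log_iff (by linarith) (by linarith)).2 (by linarith)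
  -- exp of φ is the ratio
  have hexp : ∀ x : ℝ, 0 < x → Real.exp (φ x) = deriv f (x + t) / deriv f x := by
    intro x hx
    have h2 := hFneg (x + t) (hmemt x hx)
    have h3 := hFneg x (hmem x hx)
    simp only [hφdef]
    rw [hgval _ (hmemt x hx), hgval _ (hmem x hx), Real.exp_sub,
      Real.exp_log (by linarith), Real.exp_log (by linarith), neg_div_neg_eq]
  by_cases hc : ∀ ε > (0:ℝ), ∃ x > (0:ℝ), -ε < φ x
  · -- φ → 0 hence the ratio tends to 1
    have hφ0 : Filter.Tendsto φ Filter.atTop (nhds 0) := by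
      rw [Metric.tendsto_atTop]
      intro ε hε
      obtain ⟨x₀, hx₀, hx₀ε⟩ := hc ε hε
      refine ⟨x₀, fun x hx => ?_⟩
      have hx' : 0 < x := hx₀.trans_le hx
      have h1 := hmono x₀ x hx₀ hx
      have h2 := hle0 x hx'
      rw [Real.dist_eq, sub_zero, abs_lt]
      exact ⟨by linarith, by linarith⟩
    have hcomp := (Real.continuous_exp.tendsto 0).comp hφ0
    rw [Real.exp_zero] at hcomp
    apply hcomp.congr'
    filter_upwards [eventually_gt_atTop (0:ℝ)] with x hx
    exact hexp x hx
  · exfalso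
    push_neg at hc
    obtain ⟨ε, hε, hbound⟩ := hc
    set c := Real.exp (-ε) with hcdef
    have hc1 : c < 1 := Real.exp_lt_one_iff.2 (by linarith)
    have hc0 : 0 < c := Real.exp_pos _
    -- geometric decay of -f'
    have hstep : ∀ y : ℝ, 0 < y → -deriv f (y + t) ≤ c * (-deriv f y) := by
      intro y hy
      have h3 := hFneg y (hmem y hy)
      have hne : deriv f y ≠ 0 := h3.ne
      have heq : -deriv f (y + t) = Real.exp (φ y) * (-deriv f y) := by
        rw [hexp y hy]; field_simp
      rw [heq, hcdef]
      exact mul_le_mul_of_nonneg_right (Real.exp_le_exp.2 (hbound y hy)) (by linarith)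
    set d := Real.exp (φ 1) with hddef
    have hd0 : 0 < d := Real.exp_pos _
    have hlower : ∀ x : ℝ, 1 ≤ x → d * (-deriv f x) ≤ -deriv f (x + t) := by
      intro x hx1
      have hx : (0:ℝ) < x := lt_of_lt_of_le one_pos hx1
      have h3 := hFneg x (hmem x hx)
      have hne : deriv f x ≠ 0 := h3.ne
      have heq : -deriv f (x + t) = Real.exp (φ x) * (-deriv f x) := by
        rw [hexp x hx]; field_simp
      rw [heq, hddef]
      exact mul_le_mul_of_nonneg_right (Real.exp_le_exp.2 (hmono 1 x one_pos hx1)) (by linarith)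
    set δ := d * (1 - c) with hδdef
    have hδ0 : 0 < δ := mul_pos hd0 (by linarith)
    have hev : ∀ᶠ x in atTop, 1 - δ < f (x + t) / f x :=
      (hratio t).eventually (eventually_gt_nhds (by linarith))
    obtain ⟨x, hx1, hxev⟩ := ((eventually_ge_atTop (1:ℝ)).and hev).exists
    have hx0 : (0:ℝ) < x := lt_of_lt_of_le one_pos hx1
    have hFx : 0 < -deriv f x := neg_pos.2 (hFneg x (hmem x hx0))
    have hfx : 0 < f x := hpos x (hmem x hx0)
    -- geometric bound by induction
    have hgeo : ∀ n : ℕ, -deriv f (x + n * t) ≤ c ^ n * (-deriv f x) ∧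
        f x - f (x + n * t) ≤ t * (-deriv f x) * (1 - c ^ n) / (1 - c) := by
      intro n
      induction n with
      | zero => norm_num
      | succ n ih =>
        obtain ⟨ih1, ih2⟩ := ih
        have hnt : (0:ℝ) ≤ (n:ℝ) * t := by positivity
        have hxn : (0:ℝ) < x + n * t := by linarith
        have hrw : x + ((n:ℕ)+1 : ℕ) * t = (x + n * t) + t := by push_cast; ring
        have hstepn := hstep (x + n * t) hxn
        have hpow : -deriv f (x + ((n:ℕ)+1 : ℕ) * t) ≤ c ^ (n+1) * (-deriv f x) := by
          rw [hrw]
          calc -deriv f ((x + n * t) + t) ≤ c * (-deriv f (x + n * t)) := hstepn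
            _ ≤ c * (c ^ n * (-deriv f x)) := by
                exact mul_le_mul_of_nonneg_left ih1 hc0.le
            _ = c ^ (n+1) * (-deriv f x) := by ring
        refine ⟨hpow, ?_⟩
        -- one-step decrement bound from tangent line at x + n*t
        have htan := SH.tangent hconv hdiff hxn (by linarith : (0:ℝ) < x + n * t + t)
        -- f (x+n*t) + F(x+n*t) * t ≤ f (x+n*t+t)
        rw [show x + n * t + t - (x + n * t) = t by ring] at htan
        have hone : f (x + n * t) - f ((x + n * t) + t) ≤ t * (-deriv f (x + n * t)) := by
          nlinarith [htan]
        have hone' : f (x + n * t) - f ((x + n * t) + t) ≤ t * (c ^ n * (-deriv f x)) :=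
          hone.trans (mul_le_mul_of_nonneg_left ih1 ht.le)
        have hfrac : t * (-deriv f x) * (1 - c ^ (n+1)) / (1 - c)
            = t * (-deriv f x) * (1 - c ^ n) / (1 - c) + t * (c ^ n * (-deriv f x)) := by
          have h1c : (1:ℝ) - c ≠ 0 := sub_ne_zero.2 hc1.ne'
          field_simp
          ring
        rw [hrw, hfrac]
        linarith
    have hB : ∀ n : ℕ, f x - f (x + n * t) ≤ t * (-deriv f x) / (1 - c) := by
      intro n
      have h1 := (hgeo n).2
      have h1c : (0:ℝ) < 1 - c := by linarith
      have h2 : t * (-deriv f x) * (1 - c ^ n) / (1 - c) ≤ t * (-deriv f x) / (1 - c) :=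
        (div_le_div_iff_of_pos_right h1c).2 (by nlinarith [mul_nonneg (mul_nonneg ht.le hFx.le) (pow_nonneg hc0.le n)])
      linarith
    have hlim : Filter.Tendsto (fun n : ℕ => f (x + n * t)) Filter.atTop (nhds 0) := by
      have h1 : Filter.Tendsto (fun n : ℕ => x + (n:ℝ) * t) Filter.atTop Filter.atTop :=
        tendsto_atTop_add_const_left _ x (tendsto_natCast_atTop_atTop.atTop_mul_const ht)
      exact hzero.comp h1
    have hfxle : f x ≤ t * (-deriv f x) / (1 - c) := by
      have h2 : Filter.Tendsto (fun n : ℕ => f x - f (x + n * t)) Filter.atTop (nhds (f x)) := by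
        simpa using tendsto_const_nhds.sub hlim
      exact le_of_tendsto h2 (Filter.Eventually.of_forall hB)
    -- lower bound on one-step decrement at x
    have htan2 := SH.tangent hconv hdiff (by linarith : (0:ℝ) < x + t) hx0
    rw [show x - (x + t) = -t by ring] at htan2
    have hdec : t * (d * (-deriv f x)) ≤ f x - f (x + t) := by
      have h1 := hlower x hx1
      nlinarith [h1]
    -- contradiction
    have h3 : (1 - c) * f x ≤ t * (-deriv f x) := by
      rw [le_div_iff₀ (by linarith : (0:ℝ) < 1 - c)] at hfxle
      linarith [mul_comm (f x) (1 - c)]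
    have h4 : (1 - δ) * f x < f (x + t) := (lt_div_iff₀ hfx).1 hxev
    have e1 : t * (d * (-deriv f x)) = d * (t * (-deriv f x)) := by ring
    have e2 : δ * f x = d * ((1 - c) * f x) := by rw [hδdef]; ring
    have e3 : (1 - δ) * f x = f x - δ * f x := by ring
    linarith [mul_le_mul_of_nonneg_left h3 hd0.le]

theorem stmt3 (f : ℝ → ℝ) (hf : StronglyHyperbolic f) (s : ℝ) (hs : s ≠ 0) :
    Filter.Tendsto (fun x => (f (x + s) - f x) / deriv f x) Filter.atTop (nhds s) := by
  have hFneg := SH.deriv_neg hf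
  have hconv := hf.2.2.2.1
  have hdiff := hf.2.2.2.2.2.1
  -- the derivative-ratio limit
  have hratio1 : Filter.Tendsto (fun x => deriv f (x + s) / deriv f x) Filter.atTop (nhds 1) := by
    rcases lt_or_gt_of_ne hs with hneg | hposs
    · have hk := (SH.key hf (t := -s) (by linarith)).inv₀ one_ne_zero
      rw [inv_one] at hk
      have hcomp := hk.comp (tendsto_atTop_add_const_right atTop s tendsto_id)
      apply hcomp.congr
      intro x
      show (deriv f ((x + s) + -s) / deriv f (x + s))⁻¹ = deriv f (x + s) / deriv f x
      rw [show x + s + -s = x by ring, inv_div]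
    · exact SH.key hf hposs
  -- squeeze
  have hlowT : Filter.Tendsto (fun x => s * (deriv f (x + s) / deriv f x)) Filter.atTop
      (nhds s) := by
    simpa using hratio1.const_mul s
  apply tendsto_of_tendsto_of_tendsto_of_le_of_le' hlowT (tendsto_const_nhds (α := ℝ))
  · filter_upwards [eventually_gt_atTop (max 0 (-s))] with x hx
    have hx0 : 0 < x := lt_of_le_of_lt (le_max_left _ _) hx
    have hxs : 0 < x + s := by
      have := lt_of_le_of_lt (le_max_right _ _) hx; linarith
    have hFx := hFneg x hx0
    have t2 := SH.tangent hconv hdiff hxs hx0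
    rw [show x - (x + s) = -s by ring] at t2
    have e2 : f (x + s) - f x ≤ s * deriv f (x + s) := by nlinarith [t2]
    rw [le_div_iff_of_neg hFx]
    have hne : deriv f x ≠ 0 := hFx.ne
    have : s * (deriv f (x + s) / deriv f x) * deriv f x = s * deriv f (x + s) := by
      field_simp
    rw [this]
    exact e2
  · filter_upwards [eventually_gt_atTop (max 0 (-s))] with x hx
    have hx0 : 0 < x := lt_of_le_of_lt (le_max_left _ _) hx
    have hxs : 0 < x + s := by
      have := lt_of_le_of_lt (le_max_right _ _) hx; linarith
    have hFx := hFneg x hx0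
    have t1 := SH.tangent hconv hdiff hx0 hxs
    rw [show x + s - x = s by ring] at t1
    rw [div_le_iff_of_neg hFx]
    nlinarith [t1]
end

section
/- Let f be a strongly hyperbolic function. Then liminf_{x→0+} f'(x)/f(x) = −∞; in particular, f'(x)/f(x) is unbounded below near 0. -/
open Filter Set Real

/-! If `f'/f ≥ M` on `(0, u)`, then `log f - M x` is monotone there, so `log f` stays bounded
above as `x → 0⁺`, contradicting `f → ∞`. -/

theorem MonotoneOn.not_tendsto_atTop_nhdsGT {g : ℝ → ℝ} {a b : ℝ} (hab : a < b)
    (hg : MonotoneOn g (Ioo a b)) : ¬ Tendsto g (nhdsWithin a (Ioi a)) atTop := by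
  intro htop
  obtain ⟨c, hac, hcb⟩ := exists_between hab
  have hnear : Ioo a c ∈ nhdsWithin a (Ioi a) := Ioo_mem_nhdsGT hac
  obtain ⟨x, hgx, hx⟩ := ((htop.eventually_gt_atTop (g c)).and hnear).exists
  exact (hg ⟨hx.1, hx.2.trans hcb⟩ ⟨hac, hcb⟩ hx.2.le).not_gt hgx

theorem not_tendsto_atTop_nhdsGT_of_le_deriv {g : ℝ → ℝ} {a b M : ℝ} (hab : a < b)
    (hg : ∀ x ∈ Ioo a b, DifferentiableAt ℝ g x) (hM : ∀ x ∈ Ioo a b, M ≤ deriv g x) :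
    ¬ Tendsto g (nhdsWithin a (Ioi a)) atTop := by
  intro htop
  have hderiv : ∀ x ∈ Ioo a b, HasDerivAt (fun y => g y - M * y) (deriv g x - M) x := fun x hx => by
    simpa only [mul_one] using (hg x hx).hasDerivAt.fun_sub ((hasDerivAt_id' x).const_mul M)
  have hmono : MonotoneOn (fun y => g y - M * y) (Ioo a b) := by
    refine monotoneOn_of_deriv_nonneg (convex_Ioo a b)
      (fun x hx => (hderiv x hx).continuousAt.continuousWithinAt) ?_ ?_
    · rw [interior_Ioo]
      exact fun x hx => (hderiv x hx).differentiableAt.differentiableWithinAt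
    · rw [interior_Ioo]
      exact fun x hx => (hderiv x hx).deriv ▸ sub_nonneg.2 (hM x hx)
  have hlin : Tendsto (fun y => -(M * y)) (nhdsWithin a (Ioi a)) (nhds (-(M * a))) :=
    ((continuous_const.mul continuous_id).neg.tendsto a).mono_left nhdsWithin_le_nhds
  exact hmono.not_tendsto_atTop_nhdsGT hab (by simpa [sub_eq_add_neg] using htop.atTop_add hlin)

theorem frequently_deriv_div_lt_of_tendsto_atTop {f : ℝ → ℝ} (hpos : ∀ x ∈ Ioi (0:ℝ), 0 < f x)
    (hdiff : ∀ x ∈ Ioi (0:ℝ), DifferentiableAt ℝ f x)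
    (htop : Tendsto f (nhdsWithin 0 (Ioi 0)) atTop) (M : ℝ) :
    ∃ᶠ x in nhdsWithin 0 (Ioi 0), deriv f x / f x < M := by
  intro hge
  obtain ⟨u, hu, hsub⟩ := mem_nhdsGT_iff_exists_Ioo_subset.1 hge
  have hlog : ∀ x ∈ Ioo 0 u, HasDerivAt (fun y => log (f y)) (deriv f x / f x) x :=
    fun x hx => (hdiff x hx.1).hasDerivAt.log (hpos x hx.1).ne'
  refine not_tendsto_atTop_nhdsGT_of_le_deriv (M := M) hu
    (fun x hx => (hlog x hx).differentiableAt) (fun x hx => ?_) (tendsto_log_atTop.comp htop)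
  rw [(hlog x hx).deriv]
  exact not_lt.1 (hsub hx)

theorem EReal.liminf_coe_eq_bot_of_frequently_lt {α : Type*} {l : Filter α} {u : α → ℝ}
    (h : ∀ M : ℝ, ∃ᶠ x in l, u x < M) : liminf (fun x => (u x : EReal)) l = ⊥ := by
  refine (EReal.eq_bot_iff_forall_lt _).2 fun y => ?_
  have hle : liminf (fun x => (u x : EReal)) l ≤ ((y - 1 : ℝ) : EReal) :=
    liminf_le_of_frequently_le' ((h (y - 1)).mono fun x hx => EReal.coe_le_coe_iff.2 hx.le)
  exact hle.trans_lt (EReal.coe_lt_coe_iff.2 (sub_one_lt y))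

theorem stmt5 (f : ℝ → ℝ) (hf : StronglyHyperbolic f) :
    Filter.liminf (fun x => ((deriv f x / f x : ℝ) : EReal)) (nhdsWithin 0 (Set.Ioi 0)) = ⊥ ∧
    ∀ M : ℝ, ∃ᶠ x in nhdsWithin 0 (Set.Ioi 0), deriv f x / f x < M := by
  obtain ⟨hpos, htop, -, -, -, hdiff, -⟩ := hf
  have hfreq := frequently_deriv_div_lt_of_tendsto_atTop hpos hdiff htop
  exact ⟨EReal.liminf_coe_eq_bot_of_frequently_lt hfreq, hfreq⟩
end

section
/- Let f be a strongly hyperbolic function, a > 1 and b > 0. Then the function ǧ(x) = a·f(x+b) − f(x) on (0,∞) has exactly one root x₀, and ǧ changes sign at x₀ (ǧ < 0 before x₀ and ǧ > 0 after x₀). -/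
open Filter Set Real

theorem stmt7 (f : ℝ → ℝ) (hf : StronglyHyperbolic f) (a b : ℝ) (ha : 1 < a) (hb : 0 < b) :
    ∃ x₀ > (0:ℝ), a * f (x₀ + b) - f x₀ = 0 ∧
      (∀ x, 0 < x → x < x₀ → a * f (x + b) - f x < 0) ∧
      (∀ x, x₀ < x → 0 < a * f (x + b) - f x) := by
  obtain ⟨hpos, h0, htop, hconv, hratio, hdiff, hlconv⟩ := hf
  have ha0 : (0:ℝ) < a := lt_trans one_pos ha
  set g : ℝ → ℝ := fun x => a * f (x + b) - f x with hgdef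
  -- Step 1: deriv f < 0 on (0, ∞)
  have hderiv_neg : ∀ x ∈ Set.Ioi (0:ℝ), deriv f x < 0 := by
    intro x hx
    have hev : ∀ᶠ y in atTop, f y < f x := htop (Iio_mem_nhds (hpos x hx))
    obtain ⟨y, hy1, hy2⟩ := (hev.and (eventually_gt_atTop x)).exists
    have hxy : x < y := hy2
    have := hconv.deriv_lt_slope hx (lt_trans hx hxy) hxy (hdiff x hx)
    rw [slope_def_field] at this
    have : deriv f x < (f y - f x) / (y - x) := this
    have hnum : f y - f x < 0 := by linarith [hy1]
    have hden : 0 < y - x := by linarith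
    calc deriv f x < (f y - f x) / (y - x) := this
      _ < 0 := div_neg_of_neg_of_pos hnum hden
  have upos : ∀ x ∈ Set.Ioi (0:ℝ), 0 < -deriv f x := fun x hx => by
    linarith [hderiv_neg x hx]
  set ψ : ℝ → ℝ := fun x => Real.log |deriv f x| with hψdef
  have hψ_eq : ∀ x ∈ Set.Ioi (0:ℝ), ψ x = Real.log (-deriv f x) := by
    intro x hx
    simp only [hψdef, abs_of_neg (hderiv_neg x hx)]
  -- Step 2: D(x) = ψ x - ψ (x+b) is strictly decreasing
  have hD : ∀ x y : ℝ, 0 < x → x < y → ψ y - ψ (y + b) < ψ x - ψ (x + b) := by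
    intro x y hx hxy
    have hy : (0:ℝ) < y := lt_trans hx hxy
    have hxm : x ∈ Set.Ioi (0:ℝ) := hx
    have hym : y ∈ Set.Ioi (0:ℝ) := hy
    have hxbm : x + b ∈ Set.Ioi (0:ℝ) := by simp only [mem_Ioi]; linarith
    have hybm : y + b ∈ Set.Ioi (0:ℝ) := by simp only [mem_Ioi]; linarith
    have s1 : (ψ y - ψ x) / (y - x) < (ψ (y + b) - ψ x) / (y + b - x) := by
      have := hlconv.secant_strict_mono hxm hym hybm (by linarith : y ≠ x)
        (by linarith : y + b ≠ x) (by linarith : y < y + b)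
      exact this
    have s2 : (ψ x - ψ (y + b)) / (x - (y + b)) < (ψ (x + b) - ψ (y + b)) / (x + b - (y + b)) := by
      have := hlconv.secant_strict_mono hybm hxm hxbm (by linarith : x ≠ y + b)
        (by linarith : x + b ≠ y + b) (by linarith : x < x + b)
      exact this
    have e1 : (ψ x - ψ (y + b)) / (x - (y + b)) = (ψ (y + b) - ψ x) / (y + b - x) := by
      rw [← neg_div_neg_eq]; ring_nf
    have e2 : (ψ (x + b) - ψ (y + b)) / (x + b - (y + b)) = (ψ (y + b) - ψ (x + b)) / (y - x) := by
      rw [← neg_div_neg_eq]; ring_nf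
    rw [e1, e2] at s2
    have s3 : (ψ y - ψ x) / (y - x) < (ψ (y + b) - ψ (x + b)) / (y - x) := s1.trans s2
    have hd : 0 < y - x := by linarith
    have := (div_lt_div_iff_of_pos_right hd).mp s3
    linarith
  -- Step 3: derivative of g
  have hgderiv : ∀ x ∈ Set.Ioi (0:ℝ), HasDerivAt g (a * deriv f (x + b) - deriv f x) x := by
    intro x hx
    have hxbm : x + b ∈ Set.Ioi (0:ℝ) := by
      simp only [mem_Ioi] at hx ⊢; linarith
    have h1 : HasDerivAt (fun x => f (x + b)) (deriv f (x + b)) x :=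
      HasDerivAt.comp_add_const x b (hdiff _ hxbm).hasDerivAt
    exact (h1.const_mul a).sub (hdiff x hx).hasDerivAt
  -- Step 4: the key monotone-sign lemma for g'
  have key : ∀ x y : ℝ, 0 < x → x < y → a * deriv f (x + b) - deriv f x ≤ 0 →
      a * deriv f (y + b) - deriv f y < 0 := by
    intro x y hx hxy hle
    have hy : (0:ℝ) < y := lt_trans hx hxy
    have hxb : x + b ∈ Set.Ioi (0:ℝ) := by simp only [mem_Ioi]; linarith
    have hyb : y + b ∈ Set.Ioi (0:ℝ) := by simp only [mem_Ioi]; linarith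
    have ux : 0 < -deriv f x := upos x hx
    have uxb : 0 < -deriv f (x + b) := upos _ hxb
    have uy : 0 < -deriv f y := upos y hy
    have uyb : 0 < -deriv f (y + b) := upos _ hyb
    -- from hle : -deriv f x ≤ a * (-deriv f (x+b))
    have h1 : -deriv f x ≤ a * -deriv f (x + b) := by linarith
    have hlog1 : ψ x - ψ (x + b) ≤ Real.log a := by
      rw [hψ_eq x hx, hψ_eq _ hxb]
      have := Real.log_le_log (by positivity) h1
      rw [Real.log_mul (by positivity) (by positivity)] at this
      linarith
    have hlog2 : ψ y - ψ (y + b) < Real.log a := lt_of_lt_of_le (hD x y hx hxy) hlog1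
    have : Real.log (-deriv f y) < Real.log (a * -deriv f (y + b)) := by
      rw [Real.log_mul (by positivity) (by positivity)]
      rw [hψ_eq y hy, hψ_eq _ hyb] at hlog2
      linarith
    have := (Real.log_lt_log_iff (show (0:ℝ) < -deriv f y by positivity)
      (show (0:ℝ) < a * -deriv f (y + b) by positivity)).mp this
    linarith
  -- Step 5: g tends to 0 at infinity
  have hgtop : Tendsto g atTop (nhds 0) := by
    have h1 : Tendsto (fun x => f (x + b)) atTop (nhds 0) :=
      htop.comp (tendsto_atTop_add_const_right atTop b tendsto_id)
    have := (h1.const_mul a).sub htop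
    simpa using this
  -- Step 6: eventually g > 0
  have hgpos : ∀ᶠ x in atTop, 0 < g x := by
    have h2 : Tendsto (fun x => a * (f (x + b) / f x)) atTop (nhds a) := by
      simpa using (hratio b).const_mul a
    have hev : ∀ᶠ x in atTop, 1 < a * (f (x + b) / f x) := h2.eventually (lt_mem_nhds ha)
    filter_upwards [hev, eventually_gt_atTop (0:ℝ)] with x h1 hx
    have hfx : 0 < f x := hpos x hx
    rw [mul_div_assoc'] at h1
    have := (one_lt_div hfx).mp h1
    simp only [hgdef]; linarith
  -- Step 7: if g' ≤ 0 at x then g x > 0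
  have claimT : ∀ x : ℝ, 0 < x → a * deriv f (x + b) - deriv f x ≤ 0 → 0 < g x := by
    intro x hx hle
    have hanti : StrictAntiOn g (Set.Ici x) := by
      apply strictAntiOn_of_deriv_neg (convex_Ici x)
      · intro z hz
        exact ((hgderiv z (lt_of_lt_of_le hx hz)).differentiableAt.continuousAt).continuousWithinAt
      · intro z hz
        rw [interior_Ici] at hz
        rw [(hgderiv z (lt_trans hx hz)).deriv]
        exact key x z hx hz hle
    -- g (x+1) ≥ 0 since g decreasing past x+1 and tends to 0
    have h1 : 0 ≤ g (x + 1) := by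
      refine le_of_tendsto hgtop ?_
      filter_upwards [eventually_gt_atTop (x + 1)] with z hz
      exact (hanti (Set.mem_Ici.mpr (by linarith)) (Set.mem_Ici.mpr (by linarith)) hz).le
    have h2 : g (x + 1) < g x := hanti (Set.mem_Ici.mpr le_rfl) (Set.mem_Ici.mpr (by linarith)) (by linarith)
    linarith
  -- Step 8: if g y ≤ 0 for some y > x > 0, then g x < 0
  have claimP : ∀ x y : ℝ, 0 < x → x < y → g y ≤ 0 → g x < 0 := by
    intro x y hx hxy hgy
    have hy : (0:ℝ) < y := lt_trans hx hxy
    have hpos' : ∀ z : ℝ, 0 < z → z < y → 0 < a * deriv f (z + b) - deriv f z := by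
      intro z hz hzy
      by_contra h
      push_neg at h
      have := claimT y hy (key z y hz hzy h).le
      linarith
    have hmono : StrictMonoOn g (Set.Icc x y) := by
      apply strictMonoOn_of_deriv_pos (convex_Icc x y)
      · intro z hz
        exact ((hgderiv z (lt_of_lt_of_le hx hz.1)).differentiableAt.continuousAt).continuousWithinAt
      · intro z hz
        rw [interior_Icc] at hz
        rw [(hgderiv z (lt_trans hx hz.1)).deriv]
        exact hpos' z (lt_trans hx hz.1) hz.2
    have := hmono (left_mem_Icc.mpr hxy.le) (right_mem_Icc.mpr hxy.le) hxy
    linarith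
  -- Step 9: a point p > 0 with g p < 0
  have hbf : 0 < f b := hpos b hb
  have hanti_f : StrictAntiOn f (Set.Ioi 0) := by
    apply strictAntiOn_of_deriv_neg (convex_Ioi 0)
    · exact fun z hz => ((hdiff z hz).continuousAt).continuousWithinAt
    · intro z hz
      rw [interior_Ioi] at hz
      exact hderiv_neg z hz
  obtain ⟨p, hp1, hp2⟩ : ∃ p : ℝ, a * f b < f p ∧ p ∈ Set.Ioi (0:ℝ) := by
    have := (h0.eventually (eventually_gt_atTop (a * f b))).and self_mem_nhdsWithin
    exact this.exists
  have hpp : (0:ℝ) < p := hp2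
  have hgp : g p < 0 := by
    have h1 : f (p + b) < f b := hanti_f (mem_Ioi.mpr hb) (by simp only [mem_Ioi]; linarith) (by linarith)
    have : a * f (p + b) < a * f b := by nlinarith
    simp only [hgdef]; linarith
  -- Step 10: a point q > p with g q > 0
  obtain ⟨q, hq1, hq2⟩ := (hgpos.and (eventually_gt_atTop p)).exists
  -- Step 11: root by IVT
  have hgcont : ContinuousOn g (Set.Icc p q) := by
    intro z hz
    exact ((hgderiv z (lt_of_lt_of_le hpp hz.1)).differentiableAt.continuousAt).continuousWithinAt
  obtain ⟨x₀, hx₀mem, hx₀⟩ : ∃ x₀ ∈ Set.Ioo p q, g x₀ = 0 := by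
    have h := intermediate_value_Ioo hq2.le hgcont
    have : (0:ℝ) ∈ Set.Ioo (g p) (g q) := ⟨hgp, hq1⟩
    obtain ⟨x₀, hmem, heq⟩ := h this
    exact ⟨x₀, hmem, heq⟩
  have hx₀pos : 0 < x₀ := lt_trans hpp hx₀mem.1
  refine ⟨x₀, hx₀pos, hx₀, ?_, ?_⟩
  · intro x hx hxx₀
    exact claimP x x₀ hx hxx₀ (le_of_eq hx₀)
  · intro x hx₀x
    by_contra h
    push_neg at h
    have := claimP x₀ x hx₀pos hx₀x h
    linarith [hx₀, this]
end

section
/- Let f be a strongly hyperbolic function, b, c ∈ ℝ with bc ≠ 0, and a > 0. Then the function ǧ(x) = a·f(x+b) + c − f(x) on (max{−b,0}, ∞) has at most two roots. -/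
open Filter Set Real

/-!
Between two roots of `g x = a * f (x + b) + c - f x` Rolle's theorem gives a root of
`g' x = a * f' (x + b) - f' x`, so it suffices that `g'` has at most one root. Since `f' < 0`,
the roots of `g'` are the solutions of `L (x + b) - L x = - log a` for `L = log |f'|`, and for a
strictly convex `L` and `b ≠ 0` the difference `x ↦ L (x + b) - L x` is strictly monotone.
-/

section Shift

variable {s : Set ℝ} {L : ℝ → ℝ}

lemma StrictConvexOn.sub_shift_lt_sub_shift (hL : StrictConvexOn ℝ s L) {b x y : ℝ}
    (hb : 0 < b) (hx : x ∈ s) (hy : y + b ∈ s) (hxy : x < y) :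
    L (x + b) - L x < L (y + b) - L y := by
  have h₁ := hL.secant_strict_mono_aux2 hx hy (lt_add_of_pos_right x hb) (by linarith)
  have h₂ := hL.secant_strict_mono_aux3 hx hy hxy (lt_add_of_pos_right y hb)
  rw [add_sub_cancel_left] at h₁ h₂
  exact (div_lt_div_iff_of_pos_right hb).mp (h₁.trans h₂)

lemma StrictConvexOn.injOn_sub_shift (hL : StrictConvexOn ℝ s L) {b : ℝ} (hb : b ≠ 0) :
    InjOn (fun x => L (x + b) - L x) {x | x ∈ s ∧ x + b ∈ s} := by
  rcases hb.lt_or_gt with hb | hb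
  · refine StrictAntiOn.injOn fun x hx y hy hxy => ?_
    have := hL.sub_shift_lt_sub_shift (neg_pos.mpr hb) hx.2
      (by rw [add_neg_cancel_right]; exact hy.1) (add_lt_add_left hxy b)
    simp only [add_neg_cancel_right] at this
    linarith
  · exact StrictMonoOn.injOn fun x hx y hy hxy => hL.sub_shift_lt_sub_shift hb hx.1 hy.2 hxy

end Shift

lemma eq_or_eq_or_eq_of_zeros_of_hasDerivAt {g g' : ℝ → ℝ} {s : Set ℝ} (hs : s.OrdConnected)
    (hg : ∀ x ∈ s, HasDerivAt g (g' x) x) (hg' : {x ∈ s | g' x = 0}.Subsingleton) :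
    ∀ x ∈ s, ∀ y ∈ s, ∀ z ∈ s, g x = 0 → g y = 0 → g z = 0 → x = y ∨ x = z ∨ y = z := by
  have rolle : ∀ p ∈ s, ∀ q ∈ s, p < q → g p = 0 → g q = 0 → ∃ u ∈ Ioo p q, u ∈ s ∧ g' u = 0 := by
    intro p hp q hq hpq hgp hgq
    have hsub : Icc p q ⊆ s := hs.out hp hq
    obtain ⟨u, hu, hgu⟩ := exists_hasDerivAt_eq_zero hpq
      (fun t ht => (hg t (hsub ht)).continuousAt.continuousWithinAt) (hgp.trans hgq.symm)
      (fun t ht => hg t (hsub (Ioo_subset_Icc_self ht)))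
    exact ⟨u, hu, hsub (Ioo_subset_Icc_self hu), hgu⟩
  have no_sorted_triple : ∀ p q r, p < q → q < r →
      p ∈ s ∧ g p = 0 → q ∈ s ∧ g q = 0 → r ∈ s ∧ g r = 0 → False := by
    intro p q r hpq hqr ⟨hp, hgp⟩ ⟨hq, hgq⟩ ⟨hr, hgr⟩
    obtain ⟨u, hu, hus, hgu⟩ := rolle p hp q hq hpq hgp hgq
    obtain ⟨v, hv, hvs, hgv⟩ := rolle q hq r hr hqr hgq hgr
    exact (hu.2.trans hv.1).ne (hg' ⟨hus, hgu⟩ ⟨hvs, hgv⟩)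
  intro x hx y hy z hz hgx hgy hgz
  replace hx : x ∈ s ∧ g x = 0 := ⟨hx, hgx⟩
  replace hy : y ∈ s ∧ g y = 0 := ⟨hy, hgy⟩
  replace hz : z ∈ s ∧ g z = 0 := ⟨hz, hgz⟩
  by_contra! hne
  obtain ⟨hxy, hxz, hyz⟩ := hne
  rcases hxy.lt_or_gt with hxy | hxy <;> rcases hxz.lt_or_gt with hxz | hxz <;>
    rcases hyz.lt_or_gt with hyz | hyz
  exacts [no_sorted_triple _ _ _ hxy hyz hx hy hz, no_sorted_triple _ _ _ hxz hyz hx hz hy,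
    by linarith, no_sorted_triple _ _ _ hxz hxy hz hx hy,
    no_sorted_triple _ _ _ hxy hxz hy hx hz, by linarith,
    no_sorted_triple _ _ _ hyz hxz hy hz hx, no_sorted_triple _ _ _ hyz hxy hz hy hx]

lemma StronglyHyperbolic.deriv_neg_s10 {f : ℝ → ℝ} (hf : StronglyHyperbolic f) {t : ℝ} (ht : 0 < t) :
    deriv f t < 0 := by
  obtain ⟨hpos, -, hlim, hconv, -, hdiff, -⟩ := hf
  obtain ⟨s₀, hs₀⟩ := (hlim.eventually (Iio_mem_nhds (hpos t ht))).exists_forall_of_atTop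
  set s := max s₀ (t + 1)
  have hts : t < s := (lt_add_one t).trans_le (le_max_right _ _)
  have hfs : f s < f t := hs₀ s (le_max_left _ _)
  calc deriv f t ≤ slope f t s := hconv.convexOn.deriv_le_slope ht (ht.trans hts) hts (hdiff t ht)
    _ < 0 := by
      rw [slope_def_field]
      exact div_neg_of_neg_of_pos (sub_neg.mpr hfs) (sub_pos.mpr hts)

lemma StronglyHyperbolic.subsingleton_deriv_shift_zeros {f : ℝ → ℝ} (hf : StronglyHyperbolic f)
    {a b : ℝ} (ha : 0 < a) (hb : b ≠ 0) :
    {x | 0 < x ∧ 0 < x + b ∧ a * deriv f (x + b) - deriv f x = 0}.Subsingleton := by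
  have log_eq : ∀ x, 0 < x + b → a * deriv f (x + b) - deriv f x = 0 →
      log |deriv f (x + b)| - log |deriv f x| = -log a := by
    intro x hxb hx
    have : |deriv f x| = a * |deriv f (x + b)| := by
      rw [← sub_eq_zero.mp hx, abs_mul, abs_of_pos ha]
    rw [this, log_mul ha.ne' (abs_ne_zero.mpr (hf.deriv_neg_s10 hxb).ne)]
    ring
  intro x ⟨hx, hxb, hx'⟩ y ⟨hy, hyb, hy'⟩
  exact hf.2.2.2.2.2.2.injOn_sub_shift hb ⟨hx, hxb⟩ ⟨hy, hyb⟩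
    ((log_eq x hxb hx').trans (log_eq y hyb hy').symm)

theorem stmt10_general (f : ℝ → ℝ) (hf : StronglyHyperbolic f) (a b c : ℝ) (ha : 0 < a)
    (hb : b ≠ 0) :
    ∀ x ∈ Set.Ioi (max (-b) 0), ∀ y ∈ Set.Ioi (max (-b) 0), ∀ z ∈ Set.Ioi (max (-b) 0),
      a * f (x + b) + c - f x = 0 → a * f (y + b) + c - f y = 0 → a * f (z + b) + c - f z = 0 →
      x = y ∨ x = z ∨ y = z := by
  have hpos : ∀ t ∈ Ioi (max (-b) 0), 0 < t ∧ 0 < t + b := fun t ht => by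
    obtain ⟨hbt, ht⟩ := max_lt_iff.mp (mem_Ioi.mp ht)
    exact ⟨ht, by linarith⟩
  have hdiff : ∀ t ∈ Ioi (0 : ℝ), HasDerivAt f (deriv f t) t :=
    fun t ht => (hf.2.2.2.2.2.1 t ht).hasDerivAt
  refine eq_or_eq_or_eq_of_zeros_of_hasDerivAt (g' := fun t => a * deriv f (t + b) - deriv f t)
    ordConnected_Ioi (fun t ht => ?_) ?_
  · have hshift := (hdiff _ (hpos t ht).2).comp_add_const t b
    exact ((hshift.const_mul a).add_const c).sub (hdiff t (hpos t ht).1)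
  · exact (hf.subsingleton_deriv_shift_zeros ha hb).anti
      fun t ⟨ht, ht'⟩ => ⟨(hpos t ht).1, (hpos t ht).2, ht'⟩

theorem stmt10 (f : ℝ → ℝ) (hf : StronglyHyperbolic f) (a b c : ℝ) (ha : 0 < a)
    (hb : b ≠ 0) (hc : c ≠ 0) :
    ∀ x ∈ Set.Ioi (max (-b) 0), ∀ y ∈ Set.Ioi (max (-b) 0), ∀ z ∈ Set.Ioi (max (-b) 0),
      a * f (x + b) + c - f x = 0 → a * f (y + b) + c - f y = 0 → a * f (z + b) + c - f z = 0 →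
      x = y ∨ x = z ∨ y = z :=
  stmt10_general f hf a b c ha hb
end

section
/- Let f be a strongly hyperbolic function, 0 < a ≤ 1, b > 0, c < 0. Then ǧ(x) = a·f(x+b) + c − f(x) is strictly increasing on (0,∞), and hence has at most one root. -/
open Filter Set Real

theorem stmt11 (f : ℝ → ℝ) (hf : StronglyHyperbolic f) (a b c : ℝ) (ha0 : 0 < a) (ha1 : a ≤ 1)
    (hb : 0 < b) (hc : c < 0) :
    StrictMonoOn (fun x => a * f (x + b) + c - f x) (Set.Ioi 0) ∧
    ∀ x ∈ Set.Ioi (0:ℝ), ∀ y ∈ Set.Ioi (0:ℝ),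
      a * f (x + b) + c - f x = 0 → a * f (y + b) + c - f y = 0 → x = y := by
  obtain ⟨hpos, _, hlim, hconv, _, _, _⟩ := hf
  -- f is antitone on Ioi 0
  have hanti : ∀ x ∈ Set.Ioi (0:ℝ), ∀ y ∈ Set.Ioi (0:ℝ), x < y → f y ≤ f x := by
    intro x hx y hy hxy
    by_contra h
    push_neg at h
    have hs : 0 < (f y - f x) / (y - x) := by
      apply div_pos (by linarith) (by linarith)
    have hev : ∀ᶠ z in Filter.atTop, f z < f x :=
      hlim.eventually (Filter.Tendsto.eventually_lt_const (hpos x hx) tendsto_id)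
    obtain ⟨z, hz1, hz2⟩ := (hev.and (Filter.eventually_gt_atTop y)).exists
    have hzpos : z ∈ Set.Ioi (0:ℝ) := by
      simp only [Set.mem_Ioi] at *; linarith
    have := hconv.convexOn.secant_mono hx hy hzpos (by linarith : y ≠ x)
      (by linarith : z ≠ x) hz2.le
    have h1 : 0 < (f z - f x) / (z - x) := lt_of_lt_of_le hs this
    have h2 : 0 < z - x := by simp only [Set.mem_Ioi] at *; linarith
    have h3 : 0 < f z - f x := by
      have := mul_pos h1 h2
      rwa [div_mul_cancel₀ _ (ne_of_gt h2)] at this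
    linarith
  -- the difference f(x+b) - f(x) is strictly increasing
  have hdiff : ∀ x ∈ Set.Ioi (0:ℝ), ∀ y ∈ Set.Ioi (0:ℝ), x < y →
      f (x + b) - f x < f (y + b) - f y := by
    intro x hx y hy hxy
    have hx' : (0:ℝ) < x := hx
    have hy' : (0:ℝ) < y := hy
    have hxb : x + b ∈ Set.Ioi (0:ℝ) := by simp only [Set.mem_Ioi]; linarith
    have hyb : y + b ∈ Set.Ioi (0:ℝ) := by simp only [Set.mem_Ioi]; linarith
    have h1 : (f (x + b) - f x) / (x + b - x) < (f (y + b) - f x) / (y + b - x) :=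
      hconv.secant_strict_mono hx hxb hyb (by linarith) (by linarith) (by linarith)
    have h2 : (f x - f (y + b)) / (x - (y + b)) < (f y - f (y + b)) / (y - (y + b)) :=
      hconv.secant_strict_mono hyb hx hy (by linarith) (by linarith) hxy
    have e1 : (f (y + b) - f x) / (y + b - x) = (f x - f (y + b)) / (x - (y + b)) := by
      rw [← neg_div_neg_eq]; ring_nf
    have e2 : (f y - f (y + b)) / (y - (y + b)) = (f (y + b) - f y) / b := by
      rw [← neg_div_neg_eq]; ring_nf
    have key : (f (x + b) - f x) / b < (f (y + b) - f y) / b := by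
      have : (f (x + b) - f x) / (x + b - x) = (f (x + b) - f x) / b := by ring_nf
      rw [← this, ← e2]
      calc (f (x + b) - f x) / (x + b - x) < (f (y + b) - f x) / (y + b - x) := h1
        _ = (f x - f (y + b)) / (x - (y + b)) := e1
        _ < (f y - f (y + b)) / (y - (y + b)) := h2
    exact sub_lt_sub_iff_right 0 |>.mp (by linarith [(div_lt_div_iff_of_pos_right hb).mp key])
  have hmono : StrictMonoOn (fun x => a * f (x + b) + c - f x) (Set.Ioi 0) := by
    intro x hx y hy hxy
    simp only
    have hD := hdiff x hx y hy hxy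
    have hF := hanti x hx y hy hxy
    nlinarith [mul_pos ha0 (by linarith : (0:ℝ) < (f (y+b) - f y) - (f (x+b) - f x)),
      mul_nonneg (by linarith : (0:ℝ) ≤ 1 - a) (by linarith : (0:ℝ) ≤ f x - f y)]
  refine ⟨hmono, fun x hx y hy h1 h2 => hmono.injOn hx hy (h1.trans h2.symm)⟩
end

section
/- Let f be a strongly hyperbolic function and let x₁ < 0 < y₂ < y₁ be real numbers with y₁/y₂ > 1. Then there exists b₀ > −x₁ such that f(x₁+b₀)/f(b₀) = y₁/y₂; consequently the system y₁ = a·f(x₁+b), y₂ = a·f(b) has a solution with a > 0. -/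
/-! The ratio `b ↦ f (x₁ + b) / f b` is continuous on `(-x₁, ∞)`, blows up as `b → -x₁⁺`
(the numerator tends to `f (0⁺) = ∞`) and tends to `1` at `∞`; by the intermediate value theorem
it takes every value `y₁ / y₂ > 1`, and `a = y₂ / f b₀` then solves the system. -/

open Filter Set Real

open scoped Topology

theorem tendsto_comp_add_div_nhdsGT_neg {f : ℝ → ℝ} {x₁ : ℝ}
    (h0 : Tendsto f (𝓝[>] 0) atTop) (hcont : ContinuousAt f (-x₁)) (hpos : 0 < f (-x₁)) :
    Tendsto (fun b => f (x₁ + b) / f b) (𝓝[>] (-x₁)) atTop := by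
  have hshift : Tendsto (fun b => x₁ + b) (𝓝[>] (-x₁)) (𝓝[>] 0) := by
    refine tendsto_nhdsWithin_iff.2 ⟨?_, ?_⟩
    · exact ((continuous_const_add x₁).tendsto' _ _ (add_neg_cancel x₁)).mono_left
        nhdsWithin_le_nhds
    · filter_upwards [self_mem_nhdsWithin] with b (hb : -x₁ < b)
      exact show 0 < x₁ + b by linarith
  have hden : Tendsto (fun b => (f b)⁻¹) (𝓝[>] (-x₁)) (𝓝 (f (-x₁))⁻¹) :=
    (hcont.tendsto.mono_left nhdsWithin_le_nhds).inv₀ hpos.ne'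
  simpa only [div_eq_mul_inv, Function.comp_def] using
    (h0.comp hshift).atTop_mul_pos (inv_pos.2 hpos) hden

theorem continuousOn_comp_add_div {f : ℝ → ℝ} {x₁ : ℝ} (hx : x₁ ≤ 0)
    (hcont : ContinuousOn f (Ioi 0)) (hne : ∀ x ∈ Ioi (0 : ℝ), f x ≠ 0) :
    ContinuousOn (fun b => f (x₁ + b) / f b) (Ioi (-x₁)) := by
  have hb0 : ∀ b ∈ Ioi (-x₁), 0 < b := fun b (hb : -x₁ < b) => by linarith
  refine ContinuousOn.div ?_ (hcont.mono fun b hb => hb0 b hb) fun b hb => hne b (hb0 b hb)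
  exact hcont.comp (continuous_const_add x₁).continuousOn fun b (hb : -x₁ < b) =>
    show 0 < x₁ + b by linarith

namespace StronglyHyperbolic

variable {f : ℝ → ℝ}

theorem pos (hf : StronglyHyperbolic f) {x : ℝ} (hx : 0 < x) : 0 < f x := hf.1 x hx

theorem tendsto_nhdsGT_zero (hf : StronglyHyperbolic f) : Tendsto f (𝓝[>] 0) atTop := hf.2.1

theorem tendsto_comp_add_div (hf : StronglyHyperbolic f) (b : ℝ) :
    Tendsto (fun x => f (x + b) / f x) atTop (𝓝 1) :=
  hf.2.2.2.2.1 b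

theorem continuousOn (hf : StronglyHyperbolic f) : ContinuousOn f (Ioi 0) := fun x hx =>
  (hf.2.2.2.2.2.1 x hx).continuousAt.continuousWithinAt

theorem exists_comp_add_div_eq (hf : StronglyHyperbolic f) {x₁ r : ℝ} (hx : x₁ < 0) (hr : 1 < r) :
    ∃ b > -x₁, f (x₁ + b) / f b = r := by
  have hc : (0 : ℝ) < -x₁ := neg_pos.2 hx
  have hinf := tendsto_comp_add_div_nhdsGT_neg hf.tendsto_nhdsGT_zero
    (hf.continuousOn.continuousAt (Ioi_mem_nhds hc)) (hf.pos hc)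
  have hone : Tendsto (fun b => f (x₁ + b) / f b) atTop (𝓝 1) := by
    simpa only [add_comm] using hf.tendsto_comp_add_div x₁
  obtain ⟨b, hb, hbr⟩ := isPreconnected_Ioi.intermediate_value_Ioi
    (le_principal_iff.2 (Ioi_mem_atTop (-x₁))) (le_principal_iff.2 self_mem_nhdsWithin)
    (continuousOn_comp_add_div hx.le hf.continuousOn fun _ hb => (hf.pos hb).ne') hone hinf hr
  exact ⟨b, hb, hbr⟩

end StronglyHyperbolic

theorem stmt15 (f : ℝ → ℝ) (hf : StronglyHyperbolic f) (x₁ y₁ y₂ : ℝ)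
    (hx : x₁ < 0) (hy2 : 0 < y₂) (hy : y₂ < y₁) :
    ∃ b₀ > -x₁, f (x₁ + b₀) / f b₀ = y₁ / y₂ ∧
      ∃ a > (0:ℝ), y₁ = a * f (x₁ + b₀) ∧ y₂ = a * f b₀ := by
  obtain ⟨b₀, hb₀, hratio⟩ := hf.exists_comp_add_div_eq hx ((one_lt_div hy2).2 hy)
  have hfb₀ : 0 < f b₀ := hf.pos ((neg_pos.2 hx).trans hb₀)
  refine ⟨b₀, hb₀, hratio, y₂ / f b₀, div_pos hy2 hfb₀, ?_, by field_simp⟩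
  rw [div_eq_div_iff hfb₀.ne' hy2.ne'] at hratio
  field_simp
  linarith
end

section
/- Let f be a strongly hyperbolic function, s < 0 and c₁ < 0. Then the system 0 = a·f(b) + c₁, s = a·f'(b) has a solution with a > 0, b > 0; equivalently, there exists b > 0 such that f'(b)/f(b) = −s/c₁ (which is negative). -/
open Filter Set Real

theorem stmt17 (f : ℝ → ℝ) (hf : StronglyHyperbolic f) (s c₁ : ℝ) (hs : s < 0) (hc : c₁ < 0) :
    ∃ b > (0:ℝ), deriv f b / f b = -s / c₁ ∧
      ∃ a > (0:ℝ), 0 = a * f b + c₁ ∧ s = a * deriv f b := by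
  obtain ⟨hpos, h0, htop, hconv, hratio, hdiff, hlog⟩ := hf
  set t : ℝ := -s / c₁ with ht_def
  have ht : t < 0 := div_neg_of_pos_of_neg (by linarith) hc
  -- deriv f < 0 on Ioi 0
  have hderiv_neg : ∀ x ∈ Ioi (0:ℝ), deriv f x < 0 := by
    intro x hx
    by_contra hge
    push_neg at hge
    have h1 : ∀ᶠ y in atTop, f y < f x :=
      htop.eventually_lt_const (hpos x hx)
    obtain ⟨y, hy1, hy2⟩ := (h1.and (eventually_gt_atTop x)).exists
    have hyS : y ∈ Ioi (0:ℝ) := lt_trans hx hy2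
    have := hconv.deriv_lt_slope hx hyS hy2 (hdiff x hx)
    rw [slope_def_field] at this
    have hslope : (0:ℝ) < (f y - f x) / (y - x) := lt_of_le_of_lt hge this
    have : f x < f y := by
      rcases div_pos_iff.1 hslope with ⟨h, _⟩ | ⟨_, h⟩ <;> linarith
    linarith
  -- continuity of deriv f on Ioi 0
  have hcontlog : ContinuousOn (fun x => Real.log |deriv f x|) (Ioi 0) :=
    hlog.convexOn.continuousOn isOpen_Ioi
  have hcontd : ContinuousOn (deriv f) (Ioi 0) := by
    have : ContinuousOn (fun x => -Real.exp (Real.log |deriv f x|)) (Ioi 0) :=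
      (Real.continuous_exp.comp_continuousOn hcontlog).neg
    refine this.congr ?_
    intro x hx
    have hd := hderiv_neg x hx
    simp only
    rw [Real.exp_log (abs_pos.mpr hd.ne), abs_of_neg hd, neg_neg]
  have hcontf : ContinuousOn f (Ioi 0) := fun x hx =>
    (hdiff x hx).continuousAt.continuousWithinAt
  have hfne : ∀ x ∈ Ioi (0:ℝ), f x ≠ 0 := fun x hx => (hpos x hx).ne'
  have hcontg : ContinuousOn (fun x => deriv f x / f x) (Ioi 0) := hcontd.div hcontf hfne
  -- small point: x₀ := -1/(2t)
  set x₀ : ℝ := -1 / (2 * t) with hx₀def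
  have hx₀pos : 0 < x₀ := by
    apply div_pos_of_neg_of_neg <;> linarith
  have hx₀S : x₀ ∈ Ioi (0:ℝ) := hx₀pos
  have htne : t ≠ 0 := ht.ne
  have htx₀ : t * x₀ = -1/2 := by
    rw [hx₀def]
    field_simp
  -- find xs ∈ (0, x₀) with f xs ≥ 2 f x₀
  have hev1 : ∀ᶠ x in nhdsWithin 0 (Ioi (0:ℝ)), 2 * f x₀ ≤ f x := h0.eventually_ge_atTop _
  have hev2 : Ioo (0:ℝ) x₀ ∈ nhdsWithin 0 (Ioi (0:ℝ)) := Ioo_mem_nhdsGT hx₀pos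
  obtain ⟨xs, hxs1, hxs2⟩ := (hev1.and (eventually_mem_set.2 hev2)).exists
  obtain ⟨hxs0, hxsx₀⟩ := hxs2
  have hxsS : xs ∈ Ioi (0:ℝ) := hxs0
  have hgxs : deriv f xs / f xs ≤ t := by
    have hslope := hconv.deriv_lt_slope hxsS hx₀S hxsx₀ (hdiff xs hxsS)
    rw [slope_def_field] at hslope
    have hfxs : 0 < f xs := hpos xs hxsS
    have hfx₀ : 0 < f x₀ := hpos x₀ hx₀S
    have hdx : 0 < x₀ - xs := by linarith
    -- (f x₀ - f xs)/(x₀ - xs) ≤ t * f xs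
    have key : f x₀ - f xs ≤ t * f xs * (x₀ - xs) := by
      have h1 : t * (x₀ - xs) ≥ -1/2 := by nlinarith
      nlinarith
    have : deriv f xs ≤ t * f xs := by
      refine le_trans hslope.le ?_
      rw [div_le_iff₀ hdx]; linarith [key]
    exact (div_le_iff₀ hfxs).mpr this
  -- large point via MVT on log ∘ f
  have het : Real.exp t < 1 := Real.exp_lt_one_iff.mpr ht
  have hev3 : ∀ᶠ x in atTop, Real.exp t < f (x + 1) / f x :=
    (hratio 1).eventually_const_lt het
  obtain ⟨X, hX1, hX2⟩ := (hev3.and (eventually_ge_atTop xs)).exists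
  have hXS : X ∈ Ioi (0:ℝ) := lt_of_lt_of_le hxs0 hX2
  have hX1S : ∀ y ∈ Icc X (X+1), y ∈ Ioi (0:ℝ) := fun y hy => lt_of_lt_of_le hXS hy.1
  have hmvt : ∃ ξ ∈ Ioo X (X+1),
      deriv f ξ / f ξ = (Real.log (f (X+1)) - Real.log (f X)) / (X + 1 - X) := by
    apply exists_hasDerivAt_eq_slope (fun y => Real.log (f y)) (fun y => deriv f y / f y)
      (by linarith)
    · exact fun y hy => ((hcontf y (hX1S y hy)).mono (fun z hz => hX1S z hz)).log
        (hfne y (hX1S y hy)) |>.mono (fun z hz => hz)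
    · intro y hy
      have hyS : y ∈ Ioi (0:ℝ) := hX1S y (Ioo_subset_Icc_self hy)
      exact ((hdiff y hyS).hasDerivAt.log (hfne y hyS))
  obtain ⟨ξ, hξmem, hξeq⟩ := hmvt
  have hξS : ξ ∈ Ioi (0:ℝ) := lt_trans hXS hξmem.1
  have hgξ : t ≤ deriv f ξ / f ξ := by
    rw [hξeq]
    have : Real.log (f (X+1)) - Real.log (f X) =
        Real.log (f (X+1) / f X) := by
      rw [Real.log_div (hfne _ (by exact lt_trans (show (0:ℝ) < X from hXS) (by linarith))) (hfne X hXS)]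
    rw [this]
    have h1 : Real.exp t < f (X+1)/f X := hX1
    have := Real.log_le_log (Real.exp_pos t) h1.le
    rw [Real.log_exp] at this
    simpa using this
  -- IVT
  have hxsξ : xs ≤ ξ := le_trans hX2 hξmem.1.le
  have hsub : Icc xs ξ ⊆ Ioi (0:ℝ) := fun z hz => lt_of_lt_of_le hxs0 hz.1
  have := intermediate_value_Icc hxsξ (hcontg.mono hsub)
  obtain ⟨b, hbmem, hbeq⟩ := this ⟨hgxs, hgξ⟩
  have hbS : b ∈ Ioi (0:ℝ) := hsub hbmem
  refine ⟨b, hbS, hbeq, -c₁ / f b, ?_, ?_, ?_⟩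
  · exact div_pos (by linarith) (hpos b hbS)
  · have hfb := (hpos b hbS).ne'
    field_simp
    ring
  · have hfb := (hpos b hbS).ne'
    have hd : deriv f b = (-s/c₁) * f b := by
      rw [div_eq_iff hfb] at hbeq; exact hbeq
    rw [hd]
    field_simp [hfb, hc.ne]
end

section
/- Let f be a strongly hyperbolic function, x_q > 0, s < 0 and y_q with s·x_q < y_q < 0. Then there exists b₁ > 0 such that (f(x_q + b₁) − f(b₁))/f'(b₁) = y_q/s. Consequently the system 0 = a·f(b) + c, y_q = a·f(x_q+b) + c, s = a·f'(b) has a solution with a > 0. -/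
open Filter Set Real

theorem stmt18 (f : ℝ → ℝ) (hf : StronglyHyperbolic f) (xq s yq : ℝ)
    (hxq : 0 < xq) (hs : s < 0) (hyq1 : s * xq < yq) (hyq2 : yq < 0) :
    ∃ b₁ > (0:ℝ), (f (xq + b₁) - f b₁) / deriv f b₁ = yq / s ∧
      ∃ a > (0:ℝ), ∃ c : ℝ, 0 = a * f b₁ + c ∧ yq = a * f (xq + b₁) + c ∧ s = a * deriv f b₁ := by
  obtain ⟨hpos, h0, hinf, hconv, hratio, hdiff, hlogconv⟩ := hf
  -- derivative is negative on (0, ∞)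
  have hderiv_neg : ∀ x ∈ Set.Ioi (0:ℝ), deriv f x < 0 := by
    intro x hx
    by_contra h
    push_neg at h
    have hfx : 0 < f x := hpos x hx
    obtain ⟨y, hy1, hy2⟩ := ((hinf.eventually (Iio_mem_nhds hfx)).and (eventually_gt_atTop x)).exists
    have hyS : y ∈ Set.Ioi (0:ℝ) := lt_trans hx hy2
    have hslope := hconv.deriv_lt_slope hx hyS hy2 (hdiff x hx)
    rw [slope_def_field] at hslope
    have : (f y - f x) / (y - x) < 0 :=
      div_neg_of_neg_of_pos (by linarith [hy1]) (by linarith)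
    linarith
  -- f is strictly decreasing on (0, ∞)
  have hcontf : ContinuousOn f (Set.Ioi 0) := fun x hx =>
    (hdiff x hx).continuousAt.continuousWithinAt
  have hanti : StrictAntiOn f (Set.Ioi 0) := by
    apply strictAntiOn_of_deriv_neg (convex_Ioi 0) hcontf
    intro x hx
    exact hderiv_neg x (by simpa using hx)
  -- deriv f is continuous on (0, ∞)
  have hderiv_cont : ContinuousOn (deriv f) (Set.Ioi 0) := by
    have h1 : ContinuousOn (fun x => Real.log |deriv f x|) (Set.Ioi 0) :=
      hlogconv.convexOn.continuousOn isOpen_Ioi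
    have h2 : ContinuousOn (fun x => -Real.exp (Real.log |deriv f x|)) (Set.Ioi 0) :=
      (Real.continuous_exp.comp_continuousOn h1).neg
    refine h2.congr ?_
    intro x hx
    have hd := hderiv_neg x hx
    show deriv f x = -Real.exp (Real.log |deriv f x|)
    rw [Real.exp_log (abs_pos.mpr hd.ne), abs_of_neg hd]; ring
  set g : ℝ → ℝ := fun b => (f (xq + b) - f b) / deriv f b with hg
  -- g is continuous on (0, ∞)
  have hgc : ContinuousOn g (Set.Ioi 0) := by
    apply ContinuousOn.div _ hderiv_cont
    · intro x hx
      exact (hderiv_neg x hx).ne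
    · apply ContinuousOn.sub _ hcontf
      intro x hx
      exact ((hdiff (xq + x) (by simp only [Set.mem_Ioi] at hx ⊢; linarith)).continuousAt.comp
        ((continuous_const.add continuous_id).continuousAt)).continuousWithinAt
  set r : ℝ := yq / s with hr
  have hr0 : 0 < r := div_pos_of_neg_of_neg hyq2 hs
  have hrxq : r < xq := by
    rw [hr, div_lt_iff_of_neg hs]
    linarith [hyq1]
  -- Step 1: find b₀ > 0 with g b₀ ≤ r
  set δ : ℝ := r / 2 with hδ
  have hδ0 : 0 < δ := by positivity
  have hδ' : r = 2 * δ := by rw [hδ]; ring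
  obtain ⟨b₀, hfb₀, hb₀⟩ :=
    ((h0.eventually (eventually_ge_atTop (2 * f δ))).and
      (eventually_mem_nhdsWithin (s := Set.Ioi (0:ℝ)) (a := (0:ℝ)))).exists
  rw [Set.mem_Ioi] at hb₀
  have hgb₀ : g b₀ ≤ r := by
    have hdb₀ : deriv f b₀ < 0 := hderiv_neg b₀ hb₀
    have hA1 : deriv f b₀ ≤ (f (b₀ + δ) - f b₀) / δ := by
      have h := (hconv.convexOn).deriv_le_slope (x := b₀) (y := b₀ + δ)
        (Set.mem_Ioi.mpr hb₀) (Set.mem_Ioi.mpr (by linarith)) (by linarith)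
        (hdiff b₀ (Set.mem_Ioi.mpr hb₀))
      rwa [slope_def_field, add_sub_cancel_left] at h
    have hA1' : deriv f b₀ * δ ≤ f (b₀ + δ) - f b₀ := (le_div_iff₀ hδ0).mp hA1
    have hA2 : f (b₀ + δ) ≤ f δ :=
      le_of_lt (hanti (Set.mem_Ioi.mpr hδ0) (Set.mem_Ioi.mpr (by linarith)) (by linarith))
    have hA4 : 0 < f (xq + b₀) := hpos _ (Set.mem_Ioi.mpr (by linarith))
    simp only [hg]
    rw [div_le_iff_of_neg hdb₀, hδ']
    -- goal : 2 * δ * deriv f b₀ ≤ f (xq + b₀) - f b₀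
    nlinarith [hA1', hA2, hfb₀, hA4]
  -- Step 2: find b₂ > 0 with r ≤ g b₂
  have hstep2 : ∃ b₂ > (0:ℝ), r ≤ g b₂ := by
    by_contra hcon
    push_neg at hcon
    set ρ : ℝ := r / xq with hρ
    have hρ0 : 0 < ρ := by positivity
    have hρ1 : ρ < 1 := (div_lt_one hxq).mpr hrxq
    -- key pointwise step
    have key : ∀ y : ℝ, xq < y → f y - f (y + xq) ≤ ρ * (f (y - xq) - f y) := by
      intro y hy
      have hy0 : 0 < y := lt_trans hxq hy
      have hdy : deriv f y < 0 := hderiv_neg y (Set.mem_Ioi.mpr hy0)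
      have hgy := hcon y hy0
      simp only [hg] at hgy
      rw [div_lt_iff_of_neg hdy] at hgy
      have heq : f (xq + y) = f (y + xq) := by rw [add_comm]
      rw [heq] at hgy
      -- hgy : r * deriv f y < f (y + xq) - f y
      have hsl : (f y - f (y - xq)) / xq ≤ deriv f y := by
        have h := (hconv.convexOn).slope_le_deriv (x := y - xq) (y := y)
          (Set.mem_Ioi.mpr (by linarith)) (Set.mem_Ioi.mpr hy0) (by linarith)
          (hdiff y (Set.mem_Ioi.mpr hy0))
        rwa [slope_def_field, sub_sub_cancel] at h
      have hsl' : f y - f (y - xq) ≤ deriv f y * xq := (div_le_iff₀ hxq).mp hsl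
      have h1 : r * (f y - f (y - xq)) ≤ r * (deriv f y * xq) :=
        mul_le_mul_of_nonneg_left hsl' hr0.le
      rw [hρ, div_mul_eq_mul_div, le_div_iff₀ hxq]
      nlinarith [h1, mul_lt_mul_of_pos_right hgy hxq]
    -- telescoping: for every x > 0, f (x + xq) ≤ ρ * f x
    have hgeom : ∀ x : ℝ, 0 < x → f (x + xq) ≤ ρ * f x := by
      intro x hx
      set u : ℕ → ℝ := fun n => f (x + n * xq) with hu
      have hstep : ∀ n : ℕ, u (n + 1) - u (n + 2) ≤ ρ * (u n - u (n + 1)) := by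
        intro n
        have hn : (0:ℝ) ≤ (n:ℝ) := Nat.cast_nonneg n
        have hk := key (x + ((n:ℝ) + 1) * xq) (by nlinarith)
        have e1 : x + ((n:ℝ) + 1) * xq + xq = x + ((n + 2 : ℕ) : ℝ) * xq := by push_cast; ring
        have e2 : x + ((n:ℝ) + 1) * xq - xq = x + ((n : ℕ) : ℝ) * xq := by ring
        have e3 : x + ((n:ℝ) + 1) * xq = x + ((n + 1 : ℕ) : ℝ) * xq := by push_cast; ring
        rw [e1, e2, e3] at hk
        simp only [hu]
        exact hk
      have hind : ∀ N : ℕ, u 1 - u (N + 2) ≤ ρ * (u 0 - u (N + 1)) := by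
        intro N
        induction N with
        | zero => simpa using hstep 0
        | succ k ih =>
          have h2 : u (k + 2) - u (k + 3) ≤ ρ * (u (k + 1) - u (k + 2)) := by
            simpa using hstep (k + 1)
          show u 1 - u (k + 3) ≤ ρ * (u 0 - u (k + 2))
          simp only [mul_sub] at ih h2 ⊢
          linarith
      -- take limits
      have htend : Tendsto (fun n : ℕ => x + (n:ℝ) * xq) atTop atTop := by
        apply tendsto_atTop_add_const_left
        exact tendsto_natCast_atTop_atTop.atTop_mul_const hxq
      have hu0 : Tendsto u atTop (nhds 0) := hinf.comp htend
      have hL : Tendsto (fun N : ℕ => u 1 - u (N + 2)) atTop (nhds (u 1 - 0)) :=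
        tendsto_const_nhds.sub (hu0.comp (tendsto_add_atTop_nat 2))
      have hR : Tendsto (fun N : ℕ => ρ * (u 0 - u (N + 1))) atTop (nhds (ρ * (u 0 - 0))) :=
        tendsto_const_nhds.mul (tendsto_const_nhds.sub (hu0.comp (tendsto_add_atTop_nat 1)))
      have hfin := le_of_tendsto_of_tendsto' hL hR hind
      simp only [sub_zero] at hfin
      have hu1 : u 1 = f (x + xq) := by simp only [hu]; norm_num
      have hu0' : u 0 = f x := by simp only [hu]; norm_num
      rw [hu1, hu0'] at hfin
      exact hfin
    -- contradiction with the ratio limit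
    have hev : ∀ᶠ x in atTop, f (x + xq) / f x ≤ ρ := by
      filter_upwards [eventually_gt_atTop (0:ℝ)] with x hx
      rw [div_le_iff₀ (hpos x hx)]
      exact hgeom x hx
    have := le_of_tendsto (hratio xq) hev
    linarith
  obtain ⟨b₂, hb₂, hgb₂⟩ := hstep2
  -- IVT
  have hsub : Set.uIcc b₀ b₂ ⊆ Set.Ioi 0 := by
    intro x hx
    rcases Set.mem_uIcc.mp hx with ⟨h1, _⟩ | ⟨h1, _⟩
    · exact lt_of_lt_of_le hb₀ h1
    · exact lt_of_lt_of_le hb₂ h1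
  have hmem : r ∈ Set.uIcc (g b₀) (g b₂) := Set.mem_uIcc.mpr (Or.inl ⟨hgb₀, hgb₂⟩)
  obtain ⟨b₁, hb₁mem, hb₁eq⟩ := intermediate_value_uIcc (hgc.mono hsub) hmem
  have hb₁pos : 0 < b₁ := hsub hb₁mem
  refine ⟨b₁, hb₁pos, hb₁eq, ?_⟩
  have hd1 : deriv f b₁ < 0 := hderiv_neg b₁ hb₁pos
  refine ⟨s / deriv f b₁, div_pos_of_neg_of_neg hs hd1, -(s / deriv f b₁ * f b₁), by ring, ?_, ?_⟩
  · have e : s / deriv f b₁ * f (xq + b₁) + -(s / deriv f b₁ * f b₁)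
        = s * ((f (xq + b₁) - f b₁) / deriv f b₁) := by
      field_simp; ring
    rw [e]
    have hb₁eq' : (f (xq + b₁) - f b₁) / deriv f b₁ = yq / s := hb₁eq
    rw [hb₁eq', mul_div_cancel₀ yq hs.ne]
  · exact (div_mul_cancel₀ s hd1.ne).symm
end

section
/- Let f : (0,∞) → (0,∞) be differentiable and strictly convex with x ↦ ln|f'(x)| strictly convex and f strictly decreasing. For a > 0, b, c ∈ ℝ, let ǧ(x) = a·f(x+b) + c − f(x). If ǧ has exactly one root x₀ and ǧ'(x₀) = 0, then ǧ does not change sign at x₀ (x₀ is a local extremum of ǧ). -/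
/-!
Since `f' < 0`, `ǧ'(x) = a f'(x + b) - f'(x) = |f'(x)| (1 - exp φ(x))` with
`φ(x) = log a + log |f'(x + b)| - log |f'(x)|`, so `ǧ'` has the sign of `-φ`. Strict convexity of
`log |f'|` makes `φ` strictly increasing for `b > 0` and strictly decreasing for `b < 0`, and
`ǧ'(x₀) = 0` means `φ(x₀) = 0`. So `ǧ'` changes sign only at `x₀`, which is therefore a strict
global extremum of `ǧ`. The case `b = 0` cannot occur: there `ǧ'(x₀) = 0` forces `a = 1`, then
`ǧ(x₀) = 0` forces `c = 0`, and `ǧ ≡ 0` would have more than one root.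
-/

open Set Real

theorem deriv_neg_of_convexOn_of_strictAntiOn {f : ℝ → ℝ} {s : Set ℝ} {x y : ℝ}
    (hconv : ConvexOn ℝ s f) (hanti : StrictAntiOn f s) (hx : x ∈ s) (hy : y ∈ s) (hxy : x < y)
    (hf : DifferentiableAt ℝ f x) : deriv f x < 0 :=
  (hconv.deriv_le_slope hx hy hxy hf).trans_lt <| (slope_def_field f x y).symm ▸
    div_neg_of_neg_of_pos (sub_neg.2 (hanti hx hy hxy)) (sub_pos.2 hxy)

theorem StrictConvexOn.sub_lt_sub_comp_add {L : ℝ → ℝ} {s : Set ℝ} {b x y : ℝ}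
    (hL : StrictConvexOn ℝ s L) (hb : 0 < b) (hx : x ∈ s) (hxb : x + b ∈ s) (hy : y ∈ s)
    (hyb : y + b ∈ s) (hxy : x < y) : L (x + b) - L x < L (y + b) - L y := by
  have hleft : (L (x + b) - L x) / b < (L (y + b) - L x) / (y + b - x) := by
    simpa using hL.secant_strict_mono hx hxb hyb (by linarith) (by linarith) (by linarith)
  have hright : (L (y + b) - L x) / (y + b - x) < (L (y + b) - L y) / b := by
    have h := hL.secant_strict_mono hyb hx hy (by linarith) (by linarith) hxy
    rwa [← neg_div_neg_eq, neg_sub, neg_sub, ← neg_div_neg_eq (L y - _), neg_sub, neg_sub,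
      add_sub_cancel_left] at h
  exact (div_lt_div_iff_of_pos_right hb).1 (hleft.trans hright)

theorem lt_of_deriv_pos_of_deriv_neg {g : ℝ → ℝ} {m x₀ x : ℝ} (hg : ContinuousOn g (Ioi m))
    (hx₀ : x₀ ∈ Ioi m) (hpos : ∀ y ∈ Ioo m x₀, 0 < deriv g y)
    (hneg : ∀ y ∈ Ioi x₀, deriv g y < 0) (hx : x ∈ Ioi m) (hne : x ≠ x₀) : g x < g x₀ := by
  rcases hne.lt_or_gt with hlt | hgt
  · have hmono : StrictMonoOn g (Ioc m x₀) :=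
      strictMonoOn_of_deriv_pos (convex_Ioc m x₀) (hg.mono Ioc_subset_Ioi_self)
        (by rwa [interior_Ioc])
    exact hmono ⟨hx, hlt.le⟩ ⟨hx₀, le_rfl⟩ hlt
  · have hanti : StrictAntiOn g (Ici x₀) :=
      strictAntiOn_of_deriv_neg (convex_Ici x₀)
        (hg.mono fun _ hy => mem_Ioi.2 (lt_of_lt_of_le hx₀ hy))
        (by rwa [interior_Ici])
    exact hanti self_mem_Ici hgt.le hgt

theorem lt_of_deriv_neg_of_deriv_pos {g : ℝ → ℝ} {m x₀ x : ℝ} (hg : ContinuousOn g (Ioi m))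
    (hx₀ : x₀ ∈ Ioi m) (hneg : ∀ y ∈ Ioo m x₀, deriv g y < 0)
    (hpos : ∀ y ∈ Ioi x₀, 0 < deriv g y) (hx : x ∈ Ioi m) (hne : x ≠ x₀) : g x₀ < g x :=
  neg_lt_neg_iff.1 <| lt_of_deriv_pos_of_deriv_neg (g := fun y => -g y) hg.neg hx₀
    (fun y hy => by simpa [deriv.fun_neg] using hneg y hy)
    (fun y hy => by simpa [deriv.fun_neg] using hpos y hy) hx hne

theorem mem_Ioi_max_neg_zero {b x : ℝ} : x ∈ Ioi (max (-b) 0) ↔ 0 < x ∧ 0 < x + b := by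
  rw [mem_Ioi, max_lt_iff, neg_lt_iff_pos_add, and_comm]

def gCheck (f : ℝ → ℝ) (a b c x : ℝ) : ℝ := a * f (x + b) + c - f x

noncomputable def logDerivRatio (f : ℝ → ℝ) (a b x : ℝ) : ℝ :=
  log a + log |deriv f (x + b)| - log |deriv f x|

section gCheck

variable {f : ℝ → ℝ} {a b c x x₀ y : ℝ}

theorem hasDerivAt_gCheck (hx : DifferentiableAt ℝ f x) (hxb : DifferentiableAt ℝ f (x + b)) :
    HasDerivAt (gCheck f a b c) (a * deriv f (x + b) - deriv f x) x :=
  (((hxb.hasDerivAt.comp_add_const x b).const_mul a).add_const c).sub hx.hasDerivAt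

theorem deriv_gCheck_eq (ha : 0 < a) (hx : deriv f x < 0) (hxb : deriv f (x + b) < 0) :
    deriv (gCheck f a b c) x = |deriv f x| * (1 - exp (logDerivRatio f a b x)) := by
  rw [(hasDerivAt_gCheck (differentiableAt_of_deriv_ne_zero hx.ne)
      (differentiableAt_of_deriv_ne_zero hxb.ne)).deriv, logDerivRatio, exp_sub, exp_add,
    exp_log ha, exp_log (abs_pos.2 hxb.ne), exp_log (abs_pos.2 hx.ne), abs_of_neg hx,
    abs_of_neg hxb]
  field_simp [hx.ne]
  ring

theorem deriv_gCheck_pos_iff (ha : 0 < a) (hx : deriv f x < 0) (hxb : deriv f (x + b) < 0) :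
    0 < deriv (gCheck f a b c) x ↔ logDerivRatio f a b x < 0 := by
  rw [deriv_gCheck_eq ha hx hxb, mul_pos_iff_of_pos_left (abs_pos.2 hx.ne), sub_pos,
    exp_lt_one_iff]

theorem deriv_gCheck_neg_iff (ha : 0 < a) (hx : deriv f x < 0) (hxb : deriv f (x + b) < 0) :
    deriv (gCheck f a b c) x < 0 ↔ 0 < logDerivRatio f a b x := by
  rw [deriv_gCheck_eq ha hx hxb, ← neg_pos, ← mul_neg, mul_pos_iff_of_pos_left (abs_pos.2 hx.ne),
    neg_pos, sub_neg, one_lt_exp_iff]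

theorem deriv_gCheck_eq_zero_iff (ha : 0 < a) (hx : deriv f x < 0) (hxb : deriv f (x + b) < 0) :
    deriv (gCheck f a b c) x = 0 ↔ logDerivRatio f a b x = 0 := by
  rw [deriv_gCheck_eq ha hx hxb, mul_eq_zero, sub_eq_zero, eq_comm (a := 1), exp_eq_one_iff]
  simp [hx.ne]


theorem deriv_neg_of_mem_Ioi_max (hf' : ∀ x ∈ Ioi (0 : ℝ), deriv f x < 0)
    (hx : x ∈ Ioi (max (-b) 0)) : deriv f x < 0 ∧ deriv f (x + b) < 0 :=
  ⟨hf' x (mem_Ioi_max_neg_zero.1 hx).1, hf' _ (mem_Ioi_max_neg_zero.1 hx).2⟩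

theorem continuousOn_gCheck (hf' : ∀ x ∈ Ioi (0 : ℝ), deriv f x < 0) :
    ContinuousOn (gCheck f a b c) (Ioi (max (-b) 0)) := fun _ hx =>
  have ⟨hfx, hfxb⟩ := deriv_neg_of_mem_Ioi_max hf' hx
  (hasDerivAt_gCheck (differentiableAt_of_deriv_ne_zero hfx.ne)
    (differentiableAt_of_deriv_ne_zero hfxb.ne)).continuousAt.continuousWithinAt

theorem logDerivRatio_lt_logDerivRatio_of_pos
    (hL : StrictConvexOn ℝ (Ioi 0) fun x => log |deriv f x|) (hb : 0 < b) (hx : 0 < x)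
    (hxy : x < y) : logDerivRatio f a b x < logDerivRatio f a b y := by
  have := hL.sub_lt_sub_comp_add hb hx (show 0 < x + b by linarith) (hx.trans hxy)
    (show 0 < y + b by linarith) hxy
  simp only [logDerivRatio]
  linarith

theorem logDerivRatio_lt_logDerivRatio_of_neg
    (hL : StrictConvexOn ℝ (Ioi 0) fun x => log |deriv f x|) (hb : b < 0) (hxb : 0 < x + b)
    (hxy : x < y) : logDerivRatio f a b y < logDerivRatio f a b x := by
  have := hL.sub_lt_sub_comp_add (neg_pos.2 hb) hxb (show 0 < x + b + -b by linarith)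
    (show 0 < y + b by linarith) (show 0 < y + b + -b by linarith) (by linarith : x + b < y + b)
  simp only [add_neg_cancel_right] at this
  simp only [logDerivRatio]
  linarith

theorem gCheck_lt_of_deriv_eq_zero_of_pos (hf' : ∀ x ∈ Ioi (0 : ℝ), deriv f x < 0)
    (hL : StrictConvexOn ℝ (Ioi 0) fun x => log |deriv f x|) (ha : 0 < a) (hb : 0 < b)
    (hx₀ : x₀ ∈ Ioi (max (-b) 0)) (hderiv : deriv (gCheck f a b c) x₀ = 0)
    (hx : x ∈ Ioi (max (-b) 0)) (hne : x ≠ x₀) : gCheck f a b c x < gCheck f a b c x₀ := by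
  have hx₀' := deriv_neg_of_mem_Ioi_max hf' hx₀
  have hratio := (deriv_gCheck_eq_zero_iff ha hx₀'.1 hx₀'.2).1 hderiv
  refine lt_of_deriv_pos_of_deriv_neg (continuousOn_gCheck hf') hx₀ (fun y hy => ?_)
    (fun y hy => ?_) hx hne
  · have hy' := deriv_neg_of_mem_Ioi_max hf' hy.1
    rw [deriv_gCheck_pos_iff ha hy'.1 hy'.2, ← hratio]
    exact logDerivRatio_lt_logDerivRatio_of_pos hL hb (mem_Ioi_max_neg_zero.1 hy.1).1 hy.2
  · have hy' := deriv_neg_of_mem_Ioi_max hf' (mem_Ioi.2 (lt_trans hx₀ hy))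
    rw [deriv_gCheck_neg_iff ha hy'.1 hy'.2, ← hratio]
    exact logDerivRatio_lt_logDerivRatio_of_pos hL hb (mem_Ioi_max_neg_zero.1 hx₀).1 hy

theorem lt_gCheck_of_deriv_eq_zero_of_neg (hf' : ∀ x ∈ Ioi (0 : ℝ), deriv f x < 0)
    (hL : StrictConvexOn ℝ (Ioi 0) fun x => log |deriv f x|) (ha : 0 < a) (hb : b < 0)
    (hx₀ : x₀ ∈ Ioi (max (-b) 0)) (hderiv : deriv (gCheck f a b c) x₀ = 0)
    (hx : x ∈ Ioi (max (-b) 0)) (hne : x ≠ x₀) : gCheck f a b c x₀ < gCheck f a b c x := by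
  have hx₀' := deriv_neg_of_mem_Ioi_max hf' hx₀
  have hratio := (deriv_gCheck_eq_zero_iff ha hx₀'.1 hx₀'.2).1 hderiv
  refine lt_of_deriv_neg_of_deriv_pos (continuousOn_gCheck hf') hx₀ (fun y hy => ?_)
    (fun y hy => ?_) hx hne
  · have hy' := deriv_neg_of_mem_Ioi_max hf' hy.1
    rw [deriv_gCheck_neg_iff ha hy'.1 hy'.2, ← hratio]
    exact logDerivRatio_lt_logDerivRatio_of_neg hL hb (mem_Ioi_max_neg_zero.1 hy.1).2 hy.2
  · have hy' := deriv_neg_of_mem_Ioi_max hf' (mem_Ioi.2 (lt_trans hx₀ hy))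
    rw [deriv_gCheck_pos_iff ha hy'.1 hy'.2, ← hratio]
    exact logDerivRatio_lt_logDerivRatio_of_neg hL hb (mem_Ioi_max_neg_zero.1 hx₀).2 hy

theorem shift_ne_zero_of_unique_root (hx₀' : deriv f x₀ ≠ 0) (hx₀ : x₀ ∈ Ioi (max (-b) 0))
    (hroot : gCheck f a b c x₀ = 0)
    (huniq : ∀ x ∈ Ioi (max (-b) 0), gCheck f a b c x = 0 → x = x₀)
    (hderiv : deriv (gCheck f a b c) x₀ = 0) : b ≠ 0 := by
  rintro rfl
  have hf := differentiableAt_of_deriv_ne_zero hx₀'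
  rw [(hasDerivAt_gCheck hf (by rwa [add_zero])).deriv, add_zero, ← sub_one_mul, mul_eq_zero,
    sub_eq_zero] at hderiv
  obtain rfl : a = 1 := hderiv.resolve_right hx₀'
  obtain rfl : c = 0 := by simpa [gCheck] using hroot
  have := huniq (x₀ + 1) (by simp only [neg_zero, max_self, mem_Ioi] at hx₀ ⊢; linarith)
    (by simp [gCheck])
  linarith

end gCheck

theorem stmt19_general (f : ℝ → ℝ)
    (hdiff : ∀ x ∈ Set.Ioi (0:ℝ), DifferentiableAt ℝ f x)
    (hconv : StrictConvexOn ℝ (Set.Ioi 0) f)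
    (hlog : StrictConvexOn ℝ (Set.Ioi 0) (fun x => Real.log |deriv f x|))
    (hanti : StrictAntiOn f (Set.Ioi 0))
    (a b c : ℝ) (ha : 0 < a) (x₀ : ℝ) (hx₀ : x₀ ∈ Set.Ioi (max (-b) 0))
    (hroot : a * f (x₀ + b) + c - f x₀ = 0)
    (huniq : ∀ x ∈ Set.Ioi (max (-b) 0), a * f (x + b) + c - f x = 0 → x = x₀)
    (hderiv : deriv (fun x => a * f (x + b) + c - f x) x₀ = 0) :
    ∃ ε > (0:ℝ),
      (∀ x ∈ Set.Ioi (max (-b) 0), x ≠ x₀ → |x - x₀| < ε → 0 < a * f (x + b) + c - f x) ∨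
      (∀ x ∈ Set.Ioi (max (-b) 0), x ≠ x₀ → |x - x₀| < ε → a * f (x + b) + c - f x < 0) := by
  have hf' : ∀ x ∈ Ioi (0 : ℝ), deriv f x < 0 := fun x hx =>
    deriv_neg_of_convexOn_of_strictAntiOn hconv.convexOn hanti hx
      (mem_Ioi.2 (hx.trans (lt_add_one x))) (lt_add_one x) (hdiff x hx)
  have hb : b ≠ 0 := shift_ne_zero_of_unique_root
    (deriv_neg_of_mem_Ioi_max hf' hx₀).1.ne hx₀ hroot huniq hderiv
  refine ⟨1, one_pos, ?_⟩
  rcases hb.lt_or_gt with hb | hb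
  · exact Or.inl fun x hx hne _ =>
      lt_of_eq_of_lt hroot.symm (lt_gCheck_of_deriv_eq_zero_of_neg hf' hlog ha hb hx₀ hderiv hx hne)
  · exact Or.inr fun x hx hne _ =>
      lt_of_lt_of_eq (gCheck_lt_of_deriv_eq_zero_of_pos hf' hlog ha hb hx₀ hderiv hx hne) hroot

theorem stmt19 (f : ℝ → ℝ)
    (hpos : ∀ x ∈ Set.Ioi (0:ℝ), 0 < f x)
    (hdiff : ∀ x ∈ Set.Ioi (0:ℝ), DifferentiableAt ℝ f x)
    (hconv : StrictConvexOn ℝ (Set.Ioi 0) f)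
    (hlog : StrictConvexOn ℝ (Set.Ioi 0) (fun x => Real.log |deriv f x|))
    (hanti : StrictAntiOn f (Set.Ioi 0))
    (a b c : ℝ) (ha : 0 < a) (x₀ : ℝ) (hx₀ : x₀ ∈ Set.Ioi (max (-b) 0))
    (hroot : a * f (x₀ + b) + c - f x₀ = 0)
    (huniq : ∀ x ∈ Set.Ioi (max (-b) 0), a * f (x + b) + c - f x = 0 → x = x₀)
    (hderiv : deriv (fun x => a * f (x + b) + c - f x) x₀ = 0) :
    ∃ ε > (0:ℝ),
      (∀ x ∈ Set.Ioi (max (-b) 0), x ≠ x₀ → |x - x₀| < ε → 0 < a * f (x + b) + c - f x) ∨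
      (∀ x ∈ Set.Ioi (max (-b) 0), x ≠ x₀ → |x - x₀| < ε → a * f (x + b) + c - f x < 0) :=
  stmt19_general f hdiff hconv hlog hanti a b c ha x₀ hx₀ hroot huniq hderiv
end
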